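/- arXiv:math/0409250 — 11 statements merged into one kernel-verified Lean document; each statement's English description precedes it below -/
import Mathlib

section
/- Let R be a von Neumann regular ring and let a, b ∈ R with a² = a and b² = b. Let u be a quasi-inverse of b - ab and put d = u(b - ab). Then aR ∩ bR = (b - bd)R as right ideals of R. -/
/-- The principal right ideal `xR` of a ring `R`, as a set. -/
def rIdeal {R : Type*} [Ring R] (x : R) : Set R := {y | ∃ r, y = x * r}

/-!
Since `a` and `b` are idempotent, `x ∈ aR ∩ bR` means `ax = x = bx`; then `(b - ab)x = 0`, so
`dx = 0` and `x = (b - bd)x`. Conversely `b - bd = b(1 - d) ∈ bR`, and expanding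
`(b - ab)d = b - ab` gives `a(b - bd) = b - bd`, so `b - bd ∈ aR`.
-/

section

variable {R : Type*} [Ring R]

theorem rIdeal_subset_of_mem {x y : R} (h : y ∈ rIdeal x) : rIdeal y ⊆ rIdeal x := by
  obtain ⟨r, rfl⟩ := h
  rintro _ ⟨s, rfl⟩
  exact ⟨r * s, mul_assoc x r s⟩

theorem IsIdempotentElem.mem_rIdeal_iff {e : R} (he : IsIdempotentElem e) {x : R} :
    x ∈ rIdeal e ↔ e * x = x := by
  constructor
  · rintro ⟨r, rfl⟩
    rw [← mul_assoc, he.eq]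
  · exact fun h => ⟨x, h.symm⟩

theorem rIdeal_sub_mul_subset_right (b d : R) : rIdeal (b - b * d) ⊆ rIdeal b :=
  rIdeal_subset_of_mem ⟨1 - d, by noncomm_ring⟩

theorem rIdeal_sub_mul_subset_left {a b d : R} (ha : IsIdempotentElem a)
    (hd : (b - a * b) * d = b - a * b) : rIdeal (b - b * d) ⊆ rIdeal a := by
  have hmul : a * (b - b * d) = b - b * d := by
    linear_combination (norm := noncomm_ring) hd
  exact rIdeal_subset_of_mem (ha.mem_rIdeal_iff.mpr hmul)

theorem inter_rIdeal_subset_rIdeal_sub_mul {a b u : R} (ha : IsIdempotentElem a)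
    (hb : IsIdempotentElem b) : rIdeal a ∩ rIdeal b ⊆ rIdeal (b - b * (u * (b - a * b))) := by
  rintro x ⟨hxa, hxb⟩
  rw [ha.mem_rIdeal_iff] at hxa
  rw [hb.mem_rIdeal_iff] at hxb
  have hdx : u * (b - a * b) * x = 0 := by
    rw [mul_assoc, sub_mul, mul_assoc, hxb, hxa, sub_self, mul_zero]
  exact ⟨x, by rw [sub_mul, mul_assoc, hdx, mul_zero, sub_zero, hxb]⟩

end

theorem stmt1_general {R : Type*} [Ring R]
    (a b u : R) (ha : a * a = a) (hb : b * b = b)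
    (hu : (b - a * b) * u * (b - a * b) = b - a * b)
    (d : R) (hd : d = u * (b - a * b)) :
    rIdeal a ∩ rIdeal b = rIdeal (b - b * d) := by
  subst hd
  have hcd : (b - a * b) * (u * (b - a * b)) = b - a * b := by rw [← mul_assoc, hu]
  refine (inter_rIdeal_subset_rIdeal_sub_mul ha hb).antisymm ?_
  exact Set.subset_inter (rIdeal_sub_mul_subset_left ha hcd) (rIdeal_sub_mul_subset_right _ _)

/-- In a von Neumann regular ring `R`, if `a² = a`, `b² = b`,
`u` is a quasi-inverse of `b - ab`, and `d = u(b - ab)`, then `aR ∩ bR = (b - bd)R`. -/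
theorem stmt1 {R : Type*} [Ring R]
    (hreg : ∀ x : R, ∃ y : R, x * y * x = x)
    (a b u : R) (ha : a * a = a) (hb : b * b = b)
    (hu : (b - a * b) * u * (b - a * b) = b - a * b)
    (d : R) (hd : d = u * (b - a * b)) :
    rIdeal a ∩ rIdeal b = rIdeal (b - b * d) :=
  stmt1_general a b u ha hb hu d hd
end

section
/- Let E be a semisimple right module over a unital ring R and let S = End(E). Then the map X ↦ {f ∈ S : im f ⊆ X} is an order isomorphism from the lattice of submodules of E onto the lattice L(S) of principal right ideals of S, with inverse given by fS ↦ im f. -/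
section aux

variable {R E : Type*} [Ring R] [AddCommGroup E] [Module R E] [IsSemisimpleModule R E]

/-- Every submodule is the range of a projection. -/
lemma stmt7_exists_proj (X : Submodule R E) :
    ∃ π : Module.End R E, LinearMap.range π = X ∧ ∀ x ∈ X, π x = x := by
  obtain ⟨q, hq⟩ := exists_isCompl X
  refine ⟨X.subtype ∘ₗ X.projectionOnto q hq, ?_, ?_⟩
  · apply le_antisymm
    · rintro y ⟨x, rfl⟩
      exact (X.projectionOnto q hq x).2
    · intro x hx
      exact ⟨x, by simp [Submodule.projectionOnto_apply_left hq ⟨x, hx⟩]⟩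
  · intro x hx
    simp [Submodule.projectionOnto_apply_left hq ⟨x, hx⟩]

/-- Factorization along range inclusion. -/
lemma stmt7_exists_factor (f g : Module.End R E)
    (hle : LinearMap.range g ≤ LinearMap.range f) :
    ∃ h : Module.End R E, g = f * h := by
  obtain ⟨q, hq⟩ := exists_isCompl (LinearMap.ker (f : E →ₗ[R] E))
  set s : LinearMap.range f →ₗ[R] E :=
    q.subtype ∘ₗ (Submodule.quotientEquivOfIsCompl _ q hq).toLinearMap ∘ₗ
      f.quotKerEquivRange.symm.toLinearMap with hs
  have hfs : ∀ y : LinearMap.range f, f (s y) = (y : E) := by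
    intro y
    have h1 : f (s y) = f.quotKerEquivRange (Submodule.Quotient.mk (s y)) :=
      (f.quotKerEquivRange_apply_mk (s y)).symm
    rw [h1]
    have h2 : (Submodule.Quotient.mk (s y) : E ⧸ LinearMap.ker f) =
        f.quotKerEquivRange.symm y := by
      simp [hs, -Submodule.toLinearMap_quotientEquivOfIsCompl, Submodule.mk_quotientEquivOfIsCompl_apply]
    rw [h2, LinearEquiv.apply_symm_apply]
  refine ⟨s ∘ₗ (LinearMap.codRestrict _ g fun x => hle ⟨x, rfl⟩), ?_⟩
  ext x
  exact (hfs ⟨g x, hle ⟨x, rfl⟩⟩).symm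

end aux

/-- For a semisimple module `E` with `S = End(E)`, the map
`X ↦ {f ∈ S : im f ⊆ X}` is an order isomorphism from the lattice of submodules
of `E` onto the lattice `L(S)` of principal right ideals of `S`, with inverse
`fS ↦ im f`. -/
theorem stmt7 {R E : Type*} [Ring R] [AddCommGroup E] [Module R E]
    [IsSemisimpleModule R E] :
    ∃ iso : Submodule R E ≃o
        {I : Set (Module.End R E) //
          ∃ f : Module.End R E, I = {g | ∃ h : Module.End R E, g = f * h}},
      (∀ X : Submodule R E,
        (iso X : Set (Module.End R E)) = {f | LinearMap.range f ≤ X}) ∧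
      (∀ f : Module.End R E,
        iso.symm ⟨{g | ∃ h : Module.End R E, g = f * h}, f, rfl⟩ =
          LinearMap.range f) := by
  classical
  -- principal right ideal equals the set of maps with range ≤ X, via a projection
  have key : ∀ X : Submodule R E, ∃ f : Module.End R E,
      {f' : Module.End R E | LinearMap.range f' ≤ X} =
        {g | ∃ h : Module.End R E, g = f * h} := by
    intro X
    obtain ⟨π, hπr, hπfix⟩ := stmt7_exists_proj X
    refine ⟨π, Set.ext fun g => ⟨fun hg => ?_, ?_⟩⟩
    · refine ⟨g, ?_⟩
      ext x
      exact (hπfix (g x) (hg ⟨x, rfl⟩)).symm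
    · rintro ⟨h, rfl⟩ y ⟨x, rfl⟩
      exact hπr ▸ ⟨h x, rfl⟩
  -- the set determines the range of any generator
  have range_eq : ∀ f f' : Module.End R E,
      ({g | ∃ h : Module.End R E, g = f * h} : Set (Module.End R E)) =
        {g | ∃ h : Module.End R E, g = f' * h} →
      LinearMap.range f = LinearMap.range f' := by
    intro f f' hset
    have h1 : f ∈ {g : Module.End R E | ∃ h, g = f' * h} := hset ▸ ⟨1, (mul_one f).symm⟩
    have h2 : f' ∈ {g : Module.End R E | ∃ h, g = f * h} := hset.symm ▸ ⟨1, (mul_one f').symm⟩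
    obtain ⟨h, hh⟩ := h1; obtain ⟨h', hh'⟩ := h2
    apply le_antisymm
    · rintro y ⟨x, rfl⟩; exact ⟨h x, by rw [hh]; rfl⟩
    · rintro y ⟨x, rfl⟩; exact ⟨h' x, by rw [hh']; rfl⟩
  -- generated set equals the range-condition set
  have set_eq : ∀ f : Module.End R E,
      ({g | ∃ h : Module.End R E, g = f * h} : Set (Module.End R E)) =
        {g | LinearMap.range g ≤ LinearMap.range f} := by
    intro f
    ext g
    constructor
    · rintro ⟨h, rfl⟩ y ⟨x, rfl⟩; exact ⟨h x, rfl⟩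
    · intro hg; exact stmt7_exists_factor f g hg
  set T := {I : Set (Module.End R E) //
      ∃ f : Module.End R E, I = {g | ∃ h : Module.End R E, g = f * h}} with hT
  let toFun : Submodule R E → T := fun X =>
    ⟨{f | LinearMap.range f ≤ X}, (key X).choose, (key X).choose_spec⟩
  let invFun : T → Submodule R E := fun I => LinearMap.range I.2.choose
  have inv_eq : ∀ (I : Set (Module.End R E)) (hI : ∃ f : Module.End R E,
      I = {g | ∃ h : Module.End R E, g = f * h}) (f : Module.End R E)
      (hf : I = {g | ∃ h : Module.End R E, g = f * h}),
      invFun ⟨I, hI⟩ = LinearMap.range f := by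
    intro I hI f hf
    exact range_eq _ _ ((hI.choose_spec.symm.trans hf))
  have range_choice : ∀ X : Submodule R E, LinearMap.range (key X).choose = X := by
    intro X
    obtain ⟨π, hπr, hπfix⟩ := stmt7_exists_proj X
    have h := (key X).choose_spec
    apply le_antisymm
    · have h1 : (key X).choose ∈ {g : Module.End R E | ∃ h, g = (key X).choose * h} :=
        ⟨1, (mul_one _).symm⟩
      rw [← h] at h1
      exact h1
    · have hπmem : π ∈ {f : Module.End R E | LinearMap.range f ≤ X} := hπr.le
      rw [h] at hπmem
      obtain ⟨h', hh'⟩ := hπmem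
      intro x hx
      exact ⟨h' x, by rw [← Module.End.mul_apply, ← hh', hπfix x hx]⟩
  have left_inv : Function.LeftInverse invFun toFun := by
    intro X
    have := inv_eq _ ⟨(key X).choose, (key X).choose_spec⟩ (key X).choose (key X).choose_spec
    rw [show invFun (toFun X) = invFun ⟨_, ⟨(key X).choose, (key X).choose_spec⟩⟩ from rfl,
      this, range_choice]
  have right_inv : Function.RightInverse invFun toFun := by
    rintro ⟨I, hI⟩
    apply Subtype.ext
    show {f : Module.End R E | LinearMap.range f ≤ invFun ⟨I, hI⟩} = I
    have h := hI.choose_spec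
    have : invFun ⟨I, hI⟩ = LinearMap.range hI.choose := inv_eq I hI _ h
    rw [this]
    exact (h.trans (set_eq _)).symm
  refine ⟨{ toFun := toFun, invFun := invFun, left_inv := left_inv, right_inv := right_inv,
            map_rel_iff' := ?_ }, fun X => rfl, ?_⟩
  · intro X Y
    constructor
    · intro hXY
      have : (key X).choose ∈ {f : Module.End R E | LinearMap.range f ≤ Y} := by
        have h1 : (key X).choose ∈ {f : Module.End R E | LinearMap.range f ≤ X} := by
          rw [Set.mem_setOf_eq, range_choice]
        exact hXY h1
      rw [Set.mem_setOf_eq, range_choice] at this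
      exact this
    · intro hXY f hf
      exact le_trans hf hXY
  · intro f
    exact inv_eq _ ⟨f, rfl⟩ f rfl
end

section
/- Let E be a semisimple right R-module, let S = End(E), and let f ∈ S with image X = im f. Then the principal right ideal fS equals {g ∈ S : im g ⊆ X}. -/
theorem IsSemisimpleModule.exists_comp_eq_of_range_le {R M N P : Type*} [Ring R]
    [AddCommGroup M] [Module R M] [IsSemisimpleModule R M] [AddCommGroup N] [Module R N]
    [AddCommGroup P] [Module R P] (f : M →ₗ[R] N) (g : P →ₗ[R] N)
    (hg : LinearMap.range g ≤ LinearMap.range f) :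
    ∃ h : P →ₗ[R] M, f ∘ₗ h = g := by
  obtain ⟨h, hh⟩ := lifting_property f.rangeRestrict f.surjective_rangeRestrict
    (g.codRestrict _ fun x ↦ hg ⟨x, rfl⟩)
  exact ⟨h, LinearMap.ext fun x ↦ congr_arg Subtype.val (LinearMap.congr_fun hh x)⟩

/-- For a semisimple module `E` with `S = End(E)` and `f ∈ S`,
the principal right ideal `fS` equals `{g ∈ S : im g ⊆ im f}`. -/
theorem stmt8 {R E : Type*} [Ring R] [AddCommGroup E] [Module R E]
    [IsSemisimpleModule R E] (f : Module.End R E) :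
    {g : Module.End R E | ∃ h : Module.End R E, g = f * h} =
      {g : Module.End R E | LinearMap.range g ≤ LinearMap.range f} := by
  ext g
  constructor
  · rintro ⟨h, rfl⟩
    exact LinearMap.range_comp_le_range h f
  · intro hg
    obtain ⟨h, hh⟩ := IsSemisimpleModule.exists_comp_eq_of_range_le f g hg
    exact ⟨h, hh.symm⟩
end

section
/- Let R be a unital ring in which for each prime p there exists a central element a_p with p²·a_p = p·1. Define c_p = 1 - p·a_p. Then c_p is a central idempotent of R, and c_p·c_q = 0 for all distinct primes p and q. -/
/-!
Since `p` commutes with `a_p`, `(p·a_p)² = (p²·a_p)·a_p = p·a_p`, so `p·a_p` and hence `c_p = 1 - p·a_p`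
are idempotent, and `c_p` is central whenever `a_p` is. Moreover `p·c_p = p - p²·a_p = 0`, so `c_p c_q` is
killed by both `p` and `q`, hence by `gcd(p, q) = 1`.
-/

theorem eq_zero_of_nsmul_eq_zero_of_coprime {M : Type*} [AddMonoid M] {x : M} {m n : ℕ}
    (hmn : m.Coprime n) (hm : m • x = 0) (hn : n • x = 0) : x = 0 := by
  have h : addOrderOf x ∣ 1 :=
    hmn ▸ Nat.dvd_gcd (addOrderOf_dvd_of_nsmul_eq_zero hm) (addOrderOf_dvd_of_nsmul_eq_zero hn)
  exact AddMonoid.addOrderOf_eq_one_iff.mp (Nat.dvd_one.mp h)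

section

variable {R : Type*} [Ring R] {n : ℕ} {a : R}

theorem isIdempotentElem_natCast_mul (h : (n : R) ^ 2 * a = n) :
    IsIdempotentElem ((n : R) * a) :=
  calc (n : R) * a * (n * a) = (n : R) ^ 2 * a * a := by
        rw [mul_assoc, ← mul_assoc a, ← Nat.cast_comm, sq, mul_assoc, mul_assoc, mul_assoc]
    _ = n * a := by rw [h]

theorem natCast_mul_one_sub_natCast_mul (h : (n : R) ^ 2 * a = n) :
    (n : R) * (1 - n * a) = 0 := by
  rw [mul_sub, mul_one, ← mul_assoc, ← sq, h, sub_self]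

theorem one_sub_natCast_mul_mem_center (ha : a ∈ Set.center R) :
    1 - (n : R) * a ∈ Set.center R :=
  (Subring.center R).sub_mem (one_mem _) (mul_mem (natCast_mem _ n) ha)

theorem one_sub_natCast_mul_mul_one_sub_natCast_mul {m : ℕ} {b : R} (hmn : m.Coprime n)
    (ha : (m : R) ^ 2 * a = m) (hb : (n : R) ^ 2 * b = n) :
    (1 - m * a) * (1 - n * b) = 0 := by
  apply eq_zero_of_nsmul_eq_zero_of_coprime hmn
  · rw [nsmul_eq_mul, ← mul_assoc, natCast_mul_one_sub_natCast_mul ha, zero_mul]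
  · rw [nsmul_eq_mul, ← mul_assoc, Nat.cast_comm, mul_assoc, natCast_mul_one_sub_natCast_mul hb,
      mul_zero]

end

/-- If for each prime `p` there is a central `a p` with
`p² a p = p·1`, then each `c_p = 1 - p·a p` is a central idempotent, and
`c_p c_q = 0` for distinct primes `p ≠ q`. -/
theorem stmt9 {R : Type*} [Ring R] (a : ℕ → R)
    (hcen : ∀ p : ℕ, p.Prime → a p ∈ Set.center R)
    (heq : ∀ p : ℕ, p.Prime → (p : R) ^ 2 * a p = (p : R)) :
    (∀ p : ℕ, p.Prime →
      (1 - (p : R) * a p) ∈ Set.center R ∧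
      (1 - (p : R) * a p) * (1 - (p : R) * a p) = 1 - (p : R) * a p) ∧
    (∀ p q : ℕ, p.Prime → q.Prime → p ≠ q →
      (1 - (p : R) * a p) * (1 - (q : R) * a q) = 0) :=
  ⟨fun p hp => ⟨one_sub_natCast_mul_mem_center (hcen p hp),
      (isIdempotentElem_natCast_mul (heq p hp)).one_sub⟩,
    fun p q hp hq hpq => one_sub_natCast_mul_mul_one_sub_natCast_mul
      ((Nat.coprime_primes hp hq).mpr hpq) (heq p hp) (heq q hq)⟩
end

section
/- Let E be a unital ring, F a division ring, n ≥ 1, and φ : Mat_n(E) → Mat_n(F) a unital ring homomorphism. Then there exist a unital ring homomorphism σ : E → F and an invertible matrix a ∈ GL_n(F) such that φ(x) = a·(σ applied entrywise to x)·a⁻¹ for all x ∈ Mat_n(E). -/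
open Matrix


private lemma sum_std_diag {R : Type*} [Semiring R] {n : ℕ} :
    ∑ k : Fin n, Matrix.single k k (1 : R) = 1 := by
  ext i j
  by_cases h : i = j
  · subst h
    simp [Matrix.sum_apply, Matrix.single, Matrix.one_apply]
  · have hx : ∀ x : Fin n, ¬(x = i ∧ x = j) := by rintro x ⟨rfl, rfl⟩; exact h rfl
    simp [Matrix.sum_apply, Matrix.single, Matrix.one_apply, h,
      Finset.filter_false_of_mem (fun x _ => hx x)]

private lemma sandwich {R : Type*} [Semiring R] {n : ℕ} (k l z : Fin n)
    (N : Matrix (Fin n) (Fin n) R) :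
    Matrix.single k z 1 * N * Matrix.single z l 1
      = Matrix.single k l (N z z) := by
  ext p q
  by_cases hq : q = l
  · subst hq
    rw [Matrix.mul_single_apply_same]
    by_cases hp : p = k
    · subst hp
      rw [Matrix.single_mul_apply_same, one_mul, mul_one,
        Matrix.single_apply_same]
    · rw [Matrix.single_mul_apply_of_ne _ _ _ _ _ hp, zero_mul]
      exact (Matrix.single_apply_of_ne _ _ _ _ _ (by tauto)).symm
  · rw [Matrix.mul_single_apply_of_ne _ _ _ _ _ hq]
    exact (Matrix.single_apply_of_ne _ _ _ _ _ (by tauto)).symm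

private lemma aux_mul_eq_one_comm {F : Type*} [DivisionRing F] {n : ℕ}
    {a b : Matrix (Fin n) (Fin n) F} (h : b * a = 1) : a * b = 1 := by
  have hfg : ∀ x : Fin n → F, (x ᵥ* b) ᵥ* a = x := by
    intro x; rw [Matrix.vecMul_vecMul, h, Matrix.vecMul_one]
  have hsurj : Function.Surjective a.vecMulLinear := fun y => ⟨y ᵥ* b, hfg y⟩
  have hinj : Function.Injective a.vecMulLinear :=
    (LinearMap.injective_iff_surjective_of_finrank_eq_finrank rfl).mpr hsurj
  have hgf : ∀ x : Fin n → F, (x ᵥ* a) ᵥ* b = x := by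
    intro x
    apply hinj
    show ((x ᵥ* a) ᵥ* b) ᵥ* a = x ᵥ* a
    rw [hfg]
  ext i j
  have h1 := congrFun (hgf (Pi.single i 1)) j
  rw [Matrix.vecMul_vecMul, Matrix.single_one_vecMul, Matrix.row_apply] at h1
  rw [h1, Matrix.one_apply, Pi.single_apply]
  exact if_congr eq_comm rfl rfl


/-- Every unital ring homomorphism `Mat_n(E) → Mat_n(F)`
(`E` a unital ring, `F` a division ring, `n ≥ 1`) is of the form
`x ↦ a (σ x) a⁻¹` for a unital ring homomorphism `σ : E → F` applied entrywise
and an invertible matrix `a ∈ GL_n(F)`. -/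
theorem stmt11 {E F : Type*} [Ring E] [DivisionRing F] (n : ℕ) (hn : 1 ≤ n)
    (φ : Matrix (Fin n) (Fin n) E →+* Matrix (Fin n) (Fin n) F) :
    ∃ (σ : E →+* F) (a : (Matrix (Fin n) (Fin n) F)ˣ),
      ∀ x : Matrix (Fin n) (Fin n) E,
        φ x = a.val * x.map ⇑σ * a.inv := by
  set z : Fin n := ⟨0, hn⟩ with hzdef
  set e : Fin n → Fin n → Matrix (Fin n) (Fin n) F :=
    fun k l => φ (Matrix.single k l 1) with he
  -- basic system-of-matrix-units identities
  have he_mul : ∀ k l m, e k l * e l m = e k m := by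
    intro k l m
    rw [he]; simp only
    rw [← _root_.map_mul, Matrix.single_mul_single_same, one_mul]
  have he_mul_ne : ∀ (k l l' m : Fin n), l ≠ l' → e k l * e l' m = 0 := by
    intro k l l' m h
    rw [he]; simp only
    rw [← _root_.map_mul, Matrix.single_mul_single_of_ne (h := h), _root_.map_zero]
  have he_sum : ∑ k, e k k = 1 := by
    rw [he]; simp only
    rw [← _root_.map_sum, sum_std_diag, _root_.map_one]
  -- e z z is nonzero
  have hezz : e z z ≠ 0 := by
    intro h0
    have h1 : (1 : Matrix (Fin n) (Fin n) F) = 0 := by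
      rw [← he_sum]
      refine Finset.sum_eq_zero fun k _ => ?_
      calc e k k = e k z * e z z * e z k := by rw [he_mul k z z, he_mul k z k]
        _ = 0 := by rw [h0, mul_zero, zero_mul]
    have h2 := congrFun (congrFun h1 z) z
    rw [Matrix.one_apply_eq, Matrix.zero_apply] at h2
    exact one_ne_zero h2
  obtain ⟨i, j, hij⟩ : ∃ i j, e z z i j ≠ 0 := by
    by_contra hc
    push_neg at hc
    exact hezz (by ext i j; rw [hc i j, Matrix.zero_apply])
  -- the vectors
  set w : Fin n → F := fun i' => e z z i' j with hwdef
  set u : Fin n → F := fun j' => e z z i j' with hudef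
  have hw : e z z *ᵥ w = w := by
    ext i'
    have h2 := congrFun (congrFun (he_mul z z z) i') j
    rw [Matrix.mul_apply] at h2
    simpa [Matrix.mulVec, dotProduct, hwdef] using h2
  have hu : u ᵥ* e z z = u := by
    ext j'
    have h2 := congrFun (congrFun (he_mul z z z) i) j'
    rw [Matrix.mul_apply] at h2
    simpa [Matrix.vecMul, dotProduct, hudef] using h2
  have huw : u ⬝ᵥ w = e z z i j := by
    have h2 := congrFun (congrFun (he_mul z z z) i) j
    rw [Matrix.mul_apply] at h2
    simpa [dotProduct, hudef, hwdef] using h2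
  -- the conjugating matrix and its inverse candidate
  set a : Matrix (Fin n) (Fin n) F := Matrix.of fun i' k => (e k z *ᵥ w) i' with hadef
  set b0 : Matrix (Fin n) (Fin n) F := Matrix.of fun k j' => (u ᵥ* e z k) j' with hbdef
  set d : F := e z z i j with hddef
  have hb0a : b0 * a = d • (1 : Matrix (Fin n) (Fin n) F) := by
    ext k m
    rw [Matrix.mul_apply]
    have h3 : ∑ p, b0 k p * a p m = (u ᵥ* e z k) ⬝ᵥ (e m z *ᵥ w) := by
      simp [hadef, hbdef, dotProduct]
    rw [h3, Matrix.dotProduct_mulVec, Matrix.vecMul_vecMul]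
    by_cases hkm : k = m
    · subst hkm
      rw [he_mul z k z, Matrix.smul_apply, Matrix.one_apply_eq, smul_eq_mul, mul_one]
      calc (u ᵥ* e z z) ⬝ᵥ w = u ⬝ᵥ w := by rw [hu]
        _ = d := huw
    · rw [he_mul_ne z k m z hkm, Matrix.vecMul_zero, zero_dotProduct,
        Matrix.smul_apply, Matrix.one_apply_ne hkm, smul_eq_mul, mul_zero]
  have hd : d ≠ 0 := hij
  set b : Matrix (Fin n) (Fin n) F := d⁻¹ • b0 with hb'def
  have hba : b * a = 1 := by
    rw [hb'def, smul_mul_assoc, hb0a, smul_smul, inv_mul_cancel₀ hd, one_smul]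
  have hab : a * b = 1 := aux_mul_eq_one_comm hba
  -- conjugation identity
  have hconj : ∀ k l, e k l * a = a * Matrix.single k l 1 := by
    intro k l
    ext i' m
    have h3 : (e k l * a) i' m = ((e k l * e m z) *ᵥ w) i' := by
      rw [Matrix.mul_apply, ← Matrix.mulVec_mulVec]
      simp [hadef, Matrix.mulVec, dotProduct]
    by_cases hml : m = l
    · subst hml
      rw [h3, he_mul k m z, Matrix.mul_single_apply_same, mul_one]
      simp [hadef]
    · rw [h3, he_mul_ne k l m z (Ne.symm hml), Matrix.zero_mulVec,
        Matrix.mul_single_apply_of_ne _ _ _ _ _ hml]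
      rfl
  have hbe : ∀ k l, b * e k l = Matrix.single k l 1 * b := by
    intro k l
    calc b * e k l = b * e k l * (a * b) := by rw [hab, mul_one]
      _ = b * (e k l * a) * b := by rw [← mul_assoc, mul_assoc b (e k l) a]
      _ = b * a * Matrix.single k l 1 * b := by
          rw [hconj, ← mul_assoc]
      _ = Matrix.single k l 1 * b := by rw [hba, one_mul]
  -- the entrywise homomorphism
  set σ0 : E → F :=
    fun t => (b * φ (Matrix.single z z t) * a) z z with hσ0
  have hstd : ∀ (k l : Fin n) (t : E),
      b * φ (Matrix.single k l t) * a
        = Matrix.single k l (σ0 t) := by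
    intro k l t
    have h1 : Matrix.single k l t
        = Matrix.single k z (1 : E) * Matrix.single z z t
            * Matrix.single z l 1 := by
      rw [Matrix.single_mul_single_same, Matrix.single_mul_single_same,
        one_mul, mul_one]
    rw [h1, _root_.map_mul, _root_.map_mul]
    have h2 : φ (Matrix.single k z (1 : E)) = e k z := rfl
    have h3 : φ (Matrix.single z l (1 : E)) = e z l := rfl
    rw [h2, h3]
    calc b * (e k z * φ (Matrix.single z z t) * e z l) * a
        = (b * e k z) * φ (Matrix.single z z t) * (e z l * a) := by
          simp only [mul_assoc]
      _ = (Matrix.single k z 1 * b) * φ (Matrix.single z z t)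
            * (a * Matrix.single z l 1) := by rw [hbe, hconj]
      _ = Matrix.single k z 1 * (b * φ (Matrix.single z z t) * a)
            * Matrix.single z l 1 := by simp only [mul_assoc]
      _ = Matrix.single k l (σ0 t) := by rw [sandwich, hσ0]
  -- σ0 is a ring homomorphism
  have hσmul : ∀ s t, σ0 (s * t) = σ0 s * σ0 t := by
    intro s t
    have h1 : Matrix.single z z (s * t)
        = Matrix.single z z s * Matrix.single z z t :=
      (Matrix.single_mul_single_same _ _ _ _ _).symm
    have h2 : b * φ (Matrix.single z z (s * t)) * a
        = Matrix.single z z (σ0 s * σ0 t) := by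
      rw [h1, _root_.map_mul]
      calc b * (φ (Matrix.single z z s) * φ (Matrix.single z z t)) * a
          = (b * φ (Matrix.single z z s) * a)
              * (b * φ (Matrix.single z z t) * a) := by
            calc b * (φ (Matrix.single z z s) * φ (Matrix.single z z t)) * a
                = b * φ (Matrix.single z z s) * (a * b)
                    * (φ (Matrix.single z z t) * a) := by
                  rw [hab, mul_one]; simp only [mul_assoc]
              _ = (b * φ (Matrix.single z z s) * a)
                    * (b * φ (Matrix.single z z t) * a) := by
                  simp only [mul_assoc]
        _ = Matrix.single z z (σ0 s) * Matrix.single z z (σ0 t) := by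
            rw [hstd, hstd]
        _ = Matrix.single z z (σ0 s * σ0 t) :=
            Matrix.single_mul_single_same _ _ _ _ _
    have h3 := hstd z z (s * t)
    rw [h2] at h3
    have h4 := congrFun (congrFun h3 z) z
    rw [Matrix.single_apply_same, Matrix.single_apply_same] at h4
    exact h4.symm
  have hσone : σ0 1 = 1 := by
    have h1 : b * φ (Matrix.single z z (1 : E)) * a
        = Matrix.single z z (1 : F) := by
      show b * e z z * a = _
      rw [mul_assoc, hconj z z, ← mul_assoc, hba, one_mul]
    have h2 := hstd z z (1 : E)
    rw [h1] at h2
    have := congrFun (congrFun h2.symm z) z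
    rwa [Matrix.single_apply_same, Matrix.single_apply_same] at this
  have hσadd : ∀ s t, σ0 (s + t) = σ0 s + σ0 t := by
    intro s t
    rw [hσ0]
    simp only
    rw [Matrix.single_add, _root_.map_add, mul_add, add_mul, Matrix.add_apply]
  have hσzero : σ0 0 = 0 := by
    rw [hσ0]
    simp only
    rw [Matrix.single_zero, _root_.map_zero, mul_zero, zero_mul, Matrix.zero_apply]
  set σ : E →+* F :=
    { toFun := σ0, map_one' := hσone, map_mul' := hσmul,
      map_zero' := hσzero, map_add' := hσadd } with hσdef
  refine ⟨σ, ⟨a, b, hab, hba⟩, fun x => ?_⟩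
  have hmain : b * φ x * a = x.map ⇑σ := by
    have hx := Matrix.matrix_eq_sum_single x
    calc b * φ x * a
        = b * φ (∑ k, ∑ l, Matrix.single k l (x k l)) * a := by rw [← hx]
      _ = ∑ k, ∑ l, b * φ (Matrix.single k l (x k l)) * a := by
          rw [_root_.map_sum]
          simp only [_root_.map_sum, Finset.mul_sum, Finset.sum_mul]
      _ = ∑ k, ∑ l, Matrix.single k l (σ0 (x k l)) := by
          simp only [hstd]
      _ = x.map ⇑σ := by
          conv_rhs => rw [Matrix.matrix_eq_sum_single (x.map ⇑σ)]
          rfl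
  show φ x = a * x.map ⇑σ * b
  calc φ x = (a * b) * φ x * (a * b) := by rw [hab, one_mul, mul_one]
    _ = a * (b * φ x * a) * b := by simp only [mul_assoc]
    _ = a * x.map ⇑σ * b := by rw [hmain]
end

section
/- Let n ≥ 3 be a natural number. If there exist a ring R and a right R-module E such that the lattice of submodules of E is isomorphic to M_n (the lattice of length two with exactly n atoms), then n - 1 is a prime power. -/
/-- `Fin n` with the discrete (antichain) partial order. -/
def Antichain (n : ℕ) : Type := Fin n

instance {n : ℕ} : PartialOrder (Antichain n) where
  le a b := a = b
  le_refl _ := rfl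
  le_trans _ _ _ h₁ h₂ := Eq.trans h₁ h₂
  le_antisymm _ _ h _ := h

/-- `Mn n`: the lattice of length two with exactly `n` atoms (a bottom, a top,
and `n` pairwise incomparable atoms). -/
def Mn (n : ℕ) : Type := WithBot (WithTop (Antichain n))

instance {n : ℕ} : PartialOrder (Mn n) :=
  inferInstanceAs (PartialOrder (WithBot (WithTop (Antichain n))))

/-! ### Auxiliary material -/

instance {n : ℕ} : OrderBot (Mn n) :=
  inferInstanceAs (OrderBot (WithBot (WithTop (Antichain n))))

instance {n : ℕ} : OrderTop (Mn n) :=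
  inferInstanceAs (OrderTop (WithBot (WithTop (Antichain n))))

instance {n : ℕ} : Finite (Antichain n) := inferInstanceAs (Finite (Fin n))

instance {n : ℕ} : Finite (Mn n) :=
  inferInstanceAs (Finite (Option (Option (Fin n))))

namespace Stmt12Aux

variable {n : ℕ}

/-- The `i`-th atom of `Mn n`. -/
def mnAtom (i : Antichain n) : Mn n :=
  show WithBot (WithTop (Antichain n)) from
    ((i : WithTop (Antichain n)) : WithBot (WithTop (Antichain n)))

lemma mnAtom_def (i : Antichain n) :
    mnAtom i = (show WithBot (WithTop (Antichain n)) from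
      ((i : WithTop (Antichain n)) : WithBot (WithTop (Antichain n)))) := rfl

lemma mnAtom_injective : Function.Injective (mnAtom (n := n)) := by
  intro i j h
  rw [mnAtom_def, mnAtom_def] at h
  exact WithTop.coe_injective (WithBot.coe_injective h)

lemma isAtom_mnAtom (i : Antichain n) : IsAtom (mnAtom i) := by
  rw [mnAtom_def]
  show IsAtom (α := WithBot (WithTop (Antichain n))) _
  constructor
  · exact WithBot.coe_ne_bot
  · intro b hb
    induction b using WithBot.recBotCoe with
    | bot => rfl
    | coe y =>
      exfalso
      rw [WithBot.coe_lt_coe] at hb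
      induction y using WithTop.recTopCoe with
      | top => exact not_top_lt hb
      | coe j =>
        rw [WithTop.coe_lt_coe] at hb
        exact hb.ne hb.le

lemma mn_cases_aux (x : WithBot (WithTop (Antichain n))) :
    x = ⊥ ∨ x = ⊤ ∨ ∃ i : Antichain n,
      x = ((i : WithTop (Antichain n)) : WithBot (WithTop (Antichain n))) := by
  induction x using WithBot.recBotCoe with
  | bot => exact Or.inl rfl
  | coe y =>
    induction y using WithTop.recTopCoe with
    | top => exact Or.inr (Or.inl rfl)
    | coe i => exact Or.inr (Or.inr ⟨i, rfl⟩)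

lemma mn_cases (x : Mn n) : x = ⊥ ∨ x = ⊤ ∨ ∃ i : Antichain n, x = mnAtom i :=
  mn_cases_aux (show WithBot (WithTop (Antichain n)) from x)

lemma mnAtom_ne_top (hn : 2 ≤ n) (i : Antichain n) : mnAtom i ≠ (⊤ : Mn n) := by
  intro h
  rw [mnAtom_def] at h
  exact WithTop.coe_ne_top
    (WithBot.coe_injective (h : ((i : WithTop (Antichain n)) : WithBot (WithTop (Antichain n)))
      = ((⊤ : WithTop (Antichain n)) : WithBot (WithTop (Antichain n)))))

lemma not_isAtom_top (hn : 2 ≤ n) : ¬ IsAtom (⊤ : Mn n) := by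
  intro h
  have h0 : mnAtom (⟨0, by omega⟩ : Fin n) < (⊤ : Mn n) :=
    lt_of_le_of_ne le_top (mnAtom_ne_top hn _)
  exact (isAtom_mnAtom _).1 (h.2 _ h0)

lemma isAtom_iff (hn : 2 ≤ n) (x : Mn n) : IsAtom x ↔ ∃ i, x = mnAtom i := by
  constructor
  · intro hx
    rcases mn_cases x with h | h | h
    · exact absurd (h ▸ hx) (by simp [IsAtom])
    · exact absurd (h ▸ hx) (not_isAtom_top hn)
    · exact h
  · rintro ⟨i, rfl⟩; exact isAtom_mnAtom i

/-- The atoms of `Mn n` are in bijection with `Antichain n`. -/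
noncomputable def mnAtomEquiv (hn : 2 ≤ n) : {x : Mn n // IsAtom x} ≃ Antichain n := by
  refine (Equiv.ofBijective (fun i : Antichain n => ⟨mnAtom i, isAtom_mnAtom i⟩)
    ⟨?_, ?_⟩).symm
  · intro i j h
    exact mnAtom_injective (congrArg Subtype.val h)
  · rintro ⟨x, hx⟩
    obtain ⟨i, rfl⟩ := (isAtom_iff hn x).1 hx
    exact ⟨i, rfl⟩

/-- An order isomorphism between orders with bottoms preserves atoms. -/
lemma orderIso_isAtom_iff {α β : Type*} [PartialOrder α] [OrderBot α] [PartialOrder β]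
    [OrderBot β] (f : α ≃o β) (x : α) : IsAtom (f x) ↔ IsAtom x := by
  constructor
  · rintro ⟨h1, h2⟩
    refine ⟨fun hx => h1 (by rw [hx, map_bot]), fun b hb => ?_⟩
    have := h2 (f b) (f.lt_iff_lt.2 hb)
    exact f.injective (by rw [this, map_bot])
  · rintro ⟨h1, h2⟩
    refine ⟨fun hx => h1 (f.injective (by rw [hx, map_bot])), fun b hb => ?_⟩
    have hb' : f.symm b < x := by
      have := f.symm.lt_iff_lt.2 hb
      rwa [f.symm_apply_apply] at this
    have := h2 _ hb'
    have : b = f ⊥ := by rw [← this, f.apply_symm_apply]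
    rw [this, map_bot]

end Stmt12Aux

open Stmt12Aux in
/-- If `n ≥ 3` and the lattice of submodules of some module
`E` over some ring `R` is isomorphic to `M_n`, then `n - 1` is a prime power. -/
theorem stmt12 (n : ℕ) (hn : 3 ≤ n) {R E : Type*} [Ring R] [AddCommGroup E]
    [Module R E] (iso : Submodule R E ≃o Mn n) :
    ∃ p k : ℕ, p.Prime ∧ 0 < k ∧ n - 1 = p ^ k := by
  classical
  have hn2 : 2 ≤ n := by omega
  have hfin : Finite (Submodule R E) := Finite.of_equiv _ iso.toEquiv.symm
  -- atoms transfer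
  have hatom : ∀ x : Submodule R E, IsAtom x ↔ IsAtom (iso x) :=
    fun x => (orderIso_isAtom_iff iso x).symm
  -- trichotomy
  have tri : ∀ x : Submodule R E, x = ⊥ ∨ x = ⊤ ∨ IsAtom x := by
    intro x
    rcases mn_cases (iso x) with h | h | ⟨i, h⟩
    · exact Or.inl (by simpa using iso.injective (by rw [h, map_bot]))
    · exact Or.inr (Or.inl (by simpa using iso.injective (by rw [h, map_top])))
    · exact Or.inr (Or.inr ((hatom x).2 (h ▸ isAtom_mnAtom i)))
  -- distinct atoms are incomparable, with inf ⊥ and sup ⊤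
  have hnle : ∀ x y : Submodule R E, IsAtom x → IsAtom y → x ≠ y → ¬ x ≤ y := by
    intro x y hx hy hxy h
    exact hx.1 (hy.2 x (lt_of_le_of_ne h hxy))
  have hinf : ∀ x y : Submodule R E, IsAtom x → IsAtom y → x ≠ y → x ⊓ y = ⊥ := by
    intro x y hx hy hxy
    refine hx.2 _ (lt_of_le_of_ne inf_le_left fun h => ?_)
    exact hnle x y hx hy hxy (h ▸ inf_le_right)
  have hsup : ∀ x y : Submodule R E, IsAtom x → IsAtom y → x ≠ y → x ⊔ y = ⊤ := by
    intro x y hx hy hxy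
    rcases tri (x ⊔ y) with h | h | h
    · exact absurd (le_bot_iff.1 (h ▸ le_sup_left)) hx.1
    · exact h
    · have hxe : x = x ⊔ y := by
        by_contra hne
        exact hx.1 (h.2 x (lt_of_le_of_ne le_sup_left hne))
      exact absurd (hxe ▸ le_sup_right) (hnle y x hy hx (Ne.symm hxy) · )
  have hcompl : ∀ x y : Submodule R E, IsAtom x → IsAtom y → x ≠ y → IsCompl x y := by
    intro x y hx hy hxy
    exact ⟨disjoint_iff.2 (hinf x y hx hy hxy), codisjoint_iff.2 (hsup x y hx hy hxy)⟩
  -- our three atoms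
  set a : Submodule R E := iso.symm (mnAtom ⟨0, by omega⟩) with ha_def
  set b : Submodule R E := iso.symm (mnAtom ⟨1, by omega⟩) with hb_def
  set c : Submodule R E := iso.symm (mnAtom ⟨2, by omega⟩) with hc_def
  have hsymm_atom : ∀ i : Antichain n, IsAtom (iso.symm (mnAtom i)) := by
    intro i
    have := (hatom (iso.symm (mnAtom i)))
    rw [iso.apply_symm_apply] at this
    exact this.2 (isAtom_mnAtom i)
  have ha : IsAtom a := hsymm_atom _
  have hb : IsAtom b := hsymm_atom _
  have hc : IsAtom c := hsymm_atom _
  have hdist : ∀ i j : Antichain n, i ≠ j →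
      iso.symm (mnAtom i) ≠ iso.symm (mnAtom j) := by
    intro i j hij h
    exact hij (mnAtom_injective (iso.symm.injective h))
  have hab : a ≠ b := hdist _ _ (by intro h; simpa [Antichain] using congrArg Fin.val h)
  have hca : c ≠ a := hdist _ _ (by intro h; simpa [Antichain] using congrArg Fin.val h)
  have hcb : c ≠ b := hdist _ _ (by intro h; simpa [Antichain] using congrArg Fin.val h)
  -- a ≃ₗ b via the common complement c
  have hCca : IsCompl c a := hcompl _ _ hc ha hca
  have hCcb : IsCompl c b := hcompl _ _ hc hb hcb
  have hCab : IsCompl a b := hcompl _ _ ha hb hab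
  let e : (↥a) ≃ₗ[R] (↥b) :=
    (Submodule.quotientEquivOfIsCompl c a hCca).symm.trans
      (Submodule.quotientEquivOfIsCompl c b hCcb)
  -- complements of b are exactly the atoms different from b
  have hb_ne_bot : b ≠ ⊥ := hb.1
  have hb_ne_top : b ≠ ⊤ := by
    intro h
    exact ha.1 (hb.2 a (lt_of_le_of_ne (h ▸ le_top) hab))
  have complIff : ∀ q : Submodule R E, IsCompl b q ↔ (IsAtom q ∧ q ≠ b) := by
    intro q
    constructor
    · intro h
      have hq_ne_bot : q ≠ ⊥ := by
        intro hq
        exact hb_ne_top (by simpa [hq] using codisjoint_iff.1 h.codisjoint)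
      have hq_ne_top : q ≠ ⊤ := by
        intro hq
        exact hb_ne_bot (by simpa [hq] using disjoint_iff.1 h.disjoint)
      have hq_ne_b : q ≠ b := by
        intro hq
        have := disjoint_iff.1 h.disjoint
        rw [hq, inf_idem] at this
        exact hb_ne_bot this
      rcases tri q with h' | h' | h'
      · exact absurd h' hq_ne_bot
      · exact absurd h' hq_ne_top
      · exact ⟨h', hq_ne_b⟩
    · rintro ⟨hq, hqb⟩
      exact hcompl _ _ hb hq (Ne.symm hqb)
  -- counting atoms
  have card_atoms : Nat.card {x : Submodule R E // IsAtom x} = n := by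
    have e1 : {x : Submodule R E // IsAtom x} ≃ {x : Mn n // IsAtom x} :=
      (Equiv.subtypeEquiv iso.toEquiv (fun x => (orderIso_isAtom_iff iso x).symm))
    rw [Nat.card_congr (e1.trans (mnAtomEquiv hn2))]
    simp [Nat.card_eq_fintype_card, Antichain]
  -- complements of b : count is n - 1
  have eCompl : {q : Submodule R E // IsCompl b q} ≃
      {x : {x : Submodule R E // IsAtom x} // x ≠ ⟨b, hb⟩} := by
    refine (Equiv.subtypeEquivRight complIff).trans ?_
    exact {
      toFun := fun q => ⟨⟨q.1, q.2.1⟩, by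
        intro h
        exact q.2.2 (congrArg Subtype.val h)⟩
      invFun := fun x => ⟨x.1.1, x.1.2, by
        intro h
        exact x.2 (Subtype.ext h)⟩
      left_inv := fun q => rfl
      right_inv := fun x => rfl }
  have card_compl : Nat.card {q : Submodule R E // IsCompl b q} = n - 1 := by
    rw [Nat.card_congr eCompl]
    haveI : Fintype {x : Submodule R E // IsAtom x} := Fintype.ofFinite _
    rw [Nat.card_eq_fintype_card]
    classical
    rw [Fintype.card_subtype_compl, Fintype.card_subtype_eq]
    rw [← Nat.card_eq_fintype_card, card_atoms]
  -- complements of b ≃ Hom(a, b)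
  let pa : E →ₗ[R] a := a.projectionOnto b hCab
  let pb : E →ₗ[R] b := b.projectionOnto a hCab.symm
  have eProj : {f : E →ₗ[R] b // ∀ x : ↥b, f x = x} ≃ ((↥a) →ₗ[R] ↥b) := by
    refine {
      toFun := fun f => f.1 ∘ₗ a.subtype
      invFun := fun g => ⟨g ∘ₗ pa + pb, ?_⟩
      left_inv := ?_
      right_inv := ?_ }
    · intro x
      simp only [LinearMap.add_apply, LinearMap.comp_apply, pa, pb]
      rw [Submodule.linearProjOfIsCompl_apply_right hCab x,
        Submodule.linearProjOfIsCompl_apply_left hCab.symm x]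
      simp
    · rintro ⟨f, hf⟩
      apply Subtype.ext
      ext x
      have hx : (pa x : E) + (pb x : E) = x := Submodule.projection_add_projection_eq_self hCab x
      simp only [LinearMap.add_apply, LinearMap.comp_apply]
      conv_rhs => rw [← hx]
      rw [map_add, hf (pb x)]
      rfl
    · intro g
      ext x
      simp only [LinearMap.comp_apply, LinearMap.add_apply, Submodule.subtype_apply, pa, pb]
      rw [Submodule.linearProjOfIsCompl_apply_left hCab x,
        Submodule.linearProjOfIsCompl_apply_right hCab.symm x]
      simp
  -- Hom(a, b) ≃ End(b)
  have eEnd : ((↥a) →ₗ[R] ↥b) ≃ Module.End R ↥b := by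
    refine {
      toFun := fun g => g ∘ₗ (e.symm : ↥b →ₗ[R] ↥a)
      invFun := fun h => h ∘ₗ (e : ↥a →ₗ[R] ↥b)
      left_inv := ?_
      right_inv := ?_ }
    · intro g; ext x; simp
    · intro h; ext x; simp
  -- End(b) is a finite division ring of cardinality n - 1
  have card_end : Nat.card (Module.End R ↥b) = n - 1 := by
    rw [← Nat.card_congr (b.isComplEquivProj.trans (eProj.trans eEnd))]
    exact card_compl
  haveI : IsSimpleModule R ↥b := (isSimpleModule_iff_isAtom).2 hb
  haveI : Finite (Module.End R ↥b) := by
    have : Finite {q : Submodule R E // IsCompl b q} := Subtype.finite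
    exact Finite.of_equiv _ (b.isComplEquivProj.trans (eProj.trans eEnd))
  letI : DivisionRing (Module.End R ↥b) := Module.End.instDivisionRing
  letI : Field (Module.End R ↥b) := littleWedderburn _
  haveI : Fintype (Module.End R ↥b) := Fintype.ofFinite _
  obtain ⟨p, -, k, hp, hcard⟩ := FiniteField.card' (K := Module.End R ↥b)
  refine ⟨p, k, hp, k.2, ?_⟩
  rw [← card_end, Nat.card_eq_fintype_card, hcard]
end

section
/- Let E and F be division rings and let φ : Mat₂(E) → Mat₂(F) be a unital injective ring homomorphism of the form φ(x) = σ applied entrywise to x, for a non-surjective ring embedding σ : E → F. Then the matrices e_λ = [[1,0],[λ,0]] for λ ∈ F \ σ(E) are idempotents of Mat₂(F) whose principal right ideals e_λ·Mat₂(F) are pairwise distinct and none lies in the image of the map xMat₂(E) ↦ φ(x)Mat₂(F). -/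
theorem self_mem_rIdeal {R : Type*} [Ring R] (x : R) : x ∈ rIdeal x :=
  ⟨1, (mul_one x).symm⟩

theorem mem_rIdeal_of_rIdeal_eq {R : Type*} [Ring R] {x y : R} (h : rIdeal x = rIdeal y) :
    x ∈ rIdeal y :=
  h ▸ self_mem_rIdeal x

namespace Matrix

variable {R : Type*} [Ring R]

theorem isIdempotentElem_fin_two_one_zero (l : R) :
    IsIdempotentElem !![(1 : R), 0; l, 0] := by
  ext i j
  fin_cases i <;> fin_cases j <;> simp [Matrix.mul_apply, Fin.sum_univ_two]

theorem row_one_eq_mul_row_zero_of_mem_rIdeal {l : R} {x : Matrix (Fin 2) (Fin 2) R}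
    (hx : x ∈ rIdeal !![(1 : R), 0; l, 0]) (j : Fin 2) : x 1 j = l * x 0 j := by
  obtain ⟨r, rfl⟩ := hx
  simp [Matrix.mul_apply, Fin.sum_univ_two]

theorem row_zero_ne_zero_of_mem_rIdeal [Nontrivial R] {l : R} {x : Matrix (Fin 2) (Fin 2) R}
    (hx : !![(1 : R), 0; l, 0] ∈ rIdeal x) : x 0 ≠ 0 := by
  rintro hx0
  obtain ⟨r, hr⟩ := hx
  have h00 := congrFun (congrFun hr 0) 0
  simp [Matrix.mul_apply, hx0] at h00

theorem eq_of_rIdeal_eq {l m : R}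
    (h : rIdeal !![(1 : R), 0; l, 0] = rIdeal !![(1 : R), 0; m, 0]) : l = m := by
  simpa using row_one_eq_mul_row_zero_of_mem_rIdeal (mem_rIdeal_of_rIdeal_eq h) 0

theorem mem_range_of_rIdeal_eq_map {E F : Type*} [DivisionRing E] [DivisionRing F] (σ : E →+* F)
    {l : F} {x : Matrix (Fin 2) (Fin 2) E}
    (h : rIdeal !![(1 : F), 0; l, 0] = rIdeal (x.map σ)) : l ∈ Set.range σ := by
  have hrow : x.map σ 0 ≠ 0 := row_zero_ne_zero_of_mem_rIdeal (mem_rIdeal_of_rIdeal_eq h)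
  obtain ⟨j, hj⟩ := Function.ne_iff.mp hrow
  have hx0j : σ (x 0 j) ≠ 0 := hj
  have hshape : σ (x 1 j) = l * σ (x 0 j) :=
    row_one_eq_mul_row_zero_of_mem_rIdeal (mem_rIdeal_of_rIdeal_eq h.symm) j
  exact ⟨x 1 j * (x 0 j)⁻¹, by rw [map_mul, map_inv₀, hshape, mul_inv_cancel_right₀ hx0j]⟩

end Matrix

theorem stmt14_general {E F : Type*} [DivisionRing E] [DivisionRing F]
    (σ : E →+* F)
    (l : F) (hl : l ∉ Set.range σ) :
    (!![(1 : F), 0; l, 0] * !![(1 : F), 0; l, 0] = !![(1 : F), 0; l, 0]) ∧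
    (∀ m : F, m ∉ Set.range σ → l ≠ m →
      rIdeal !![(1 : F), 0; l, 0] ≠ rIdeal !![(1 : F), 0; m, 0]) ∧
    (∀ x : Matrix (Fin 2) (Fin 2) E,
      rIdeal !![(1 : F), 0; l, 0] ≠ rIdeal (x.map σ)) :=
  ⟨Matrix.isIdempotentElem_fin_two_one_zero l,
    fun _ _ hne h => hne (Matrix.eq_of_rIdeal_eq h),
    fun _ h => hl (Matrix.mem_range_of_rIdeal_eq_map σ h)⟩

/-- Let `σ : E → F` be a non-surjective ring embedding of
division rings and `φ : Mat₂(E) → Mat₂(F)` the induced entrywise homomorphism.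
For `λ ∈ F \ σ(E)`, the matrices `e_λ = [[1,0],[λ,0]]` are idempotents of
`Mat₂(F)` whose principal right ideals are pairwise distinct and none of which
lies in the image of the induced map `x·Mat₂(E) ↦ φ(x)·Mat₂(F)`. -/
theorem stmt14 {E F : Type*} [DivisionRing E] [DivisionRing F]
    (σ : E →+* F) (hσ : ¬ Function.Surjective σ)
    (l : F) (hl : l ∉ Set.range σ) :
    (!![(1 : F), 0; l, 0] * !![(1 : F), 0; l, 0] = !![(1 : F), 0; l, 0]) ∧
    (∀ m : F, m ∉ Set.range σ → l ≠ m →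
      rIdeal !![(1 : F), 0; l, 0] ≠ rIdeal !![(1 : F), 0; m, 0]) ∧
    (∀ x : Matrix (Fin 2) (Fin 2) E,
      rIdeal !![(1 : F), 0; l, 0] ≠ rIdeal (x.map σ)) :=
  stmt14_general σ l hl
end

section
/- Let L be a sectionally complemented modular lattice and let I be an ideal of L such that for all x, y ∈ L, if x is perspective to y and y ∈ I then x ∈ I. Then the relation x ≡_I y, defined by the existence of u ∈ I with x ∨ u = y ∨ u, is a lattice congruence on L. -/
/-!
Write `x ≡ y` for `∃ u ∈ I, x ⊔ u = y ⊔ u`. Reflexivity, symmetry, transitivity and compatibility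
with joins only use that `I` is an ideal; the content is compatibility with meets. The key fact is
that `I` absorbs every `p` that is disjoint from some `a` and lies below `a ⊔ u` with `u ∈ I`: a
relative complement `w` of `a ⊓ u` inside `u ⊓ (a ⊔ p)` satisfies `a ⊔ w = a ⊔ p`, so `p` is
perspective to `w ∈ I` along `a`. For comparable `a ≤ b` with `a ≡ b` this puts into `I` first a
relative complement `q` of `a` in `b`, and then, as `b = a ⊔ q`, a relative complement `p` of
`a ⊓ y` in `b ⊓ y`, which witnesses `a ⊓ y ≡ b ⊓ y`. The general case goes through `x ≡ x ⊔ x' ≡ x'`.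
-/

variable {L : Type*} [Lattice L] [OrderBot L]

/-- Perspectivity: `x ∼ y` iff they have a common complement-like axis `z`. -/
def Perspective (x y : L) : Prop :=
  ∃ z : L, x ⊔ z = y ⊔ z ∧ x ⊓ z = ⊥ ∧ y ⊓ z = ⊥

def IdealEquiv {α : Type*} [SemilatticeSup α] (I : Set α) (x y : α) : Prop :=
  ∃ u ∈ I, x ⊔ u = y ⊔ u

namespace IdealEquiv

variable {α : Type*} [SemilatticeSup α] {I : Set α} {x y z x' y' : α}

theorem refl (hne : I.Nonempty) (x : α) : IdealEquiv I x x :=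
  let ⟨u, hu⟩ := hne
  ⟨u, hu, rfl⟩

theorem symm : IdealEquiv I x y → IdealEquiv I y x
  | ⟨u, hu, h⟩ => ⟨u, hu, h.symm⟩

theorem trans (hjoin : ∀ x ∈ I, ∀ y ∈ I, x ⊔ y ∈ I) :
    IdealEquiv I x y → IdealEquiv I y z → IdealEquiv I x z
  | ⟨u, hu, hxy⟩, ⟨v, hv, hyz⟩ =>
    ⟨u ⊔ v, hjoin u hu v hv, by
      rw [← sup_assoc, hxy, sup_right_comm, hyz, sup_right_comm, sup_assoc]⟩

theorem sup (hjoin : ∀ x ∈ I, ∀ y ∈ I, x ⊔ y ∈ I) :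
    IdealEquiv I x x' → IdealEquiv I y y' → IdealEquiv I (x ⊔ y) (x' ⊔ y')
  | ⟨u, hu, hx⟩, ⟨v, hv, hy⟩ =>
    ⟨u ⊔ v, hjoin u hu v hv, by rw [sup_sup_sup_comm, hx, hy, sup_sup_sup_comm]⟩

theorem sup_right_self : IdealEquiv I x x' → IdealEquiv I x (x ⊔ x')
  | ⟨u, hu, h⟩ => ⟨u, hu, by rw [sup_assoc, ← h, ← sup_assoc, sup_idem]⟩

end IdealEquiv

theorem inf_eq_bot_of_inf_inf_eq_bot_of_le {α : Type*} [Lattice α] [OrderBot α] {a d w : α}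
    (h : a ⊓ d ⊓ w = ⊥) (hwd : w ≤ d) : w ⊓ a = ⊥ :=
  eq_bot_iff.2 (h ▸ le_inf (le_inf inf_le_right (inf_le_left.trans hwd)) inf_le_left)

section Modular

variable [IsModularLattice L]
  (hsc : ∀ a b : L, b ≤ a → ∃ c : L, b ⊓ c = ⊥ ∧ b ⊔ c = a)
  {I : Set L} (hdown : IsLowerSet I) (hpersp : ∀ x y : L, Perspective x y → y ∈ I → x ∈ I)

include hsc hdown hpersp

theorem mem_of_inf_eq_bot_of_le_sup {a p u : L} (hu : u ∈ I) (hpa : p ⊓ a = ⊥)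
    (hle : p ≤ a ⊔ u) : p ∈ I := by
  set u' := u ⊓ (a ⊔ p)
  have hau' : a ⊔ u' = a ⊔ p := by
    rw [← sup_inf_assoc_of_le u le_sup_left, inf_eq_right.2 (sup_le le_sup_left hle)]
  obtain ⟨w, hw_inf, hw_sup⟩ := hsc u' (a ⊓ u') inf_le_right
  have hwu' : w ≤ u' := hw_sup ▸ le_sup_right
  have haw : a ⊔ w = a ⊔ p := by rw [← hau', ← hw_sup, ← sup_assoc, sup_inf_self]
  refine hpersp p w ⟨a, by rw [sup_comm p, sup_comm w, haw], hpa,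
    inf_eq_bot_of_inf_inf_eq_bot_of_le hw_inf hwu'⟩ ?_
  exact hdown (hwu'.trans inf_le_left) hu

theorem IdealEquiv.inf_right_of_le {a b : L} (hab : a ≤ b) (h : IdealEquiv I a b) (y : L) :
    IdealEquiv I (a ⊓ y) (b ⊓ y) := by
  obtain ⟨u, hu, hau⟩ := h
  obtain ⟨q, hq_inf, hq_sup⟩ := hsc b a hab
  have hqI : q ∈ I := mem_of_inf_eq_bot_of_le_sup hsc hdown hpersp hu (inf_comm q a ▸ hq_inf)
    (hau ▸ (hq_sup ▸ le_sup_right).trans le_sup_left)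
  obtain ⟨p, hp_inf, hp_sup⟩ := hsc (b ⊓ y) (a ⊓ y) (inf_le_inf_right y hab)
  have hp_le : p ≤ b ⊓ y := hp_sup ▸ le_sup_right
  have hpI : p ∈ I := mem_of_inf_eq_bot_of_le_sup hsc hdown hpersp hqI
    (inf_eq_bot_of_inf_inf_eq_bot_of_le hp_inf (hp_le.trans inf_le_right))
    (hq_sup ▸ hp_le.trans inf_le_left)
  exact ⟨p, hpI, by rw [hp_sup, sup_eq_left.2 hp_le]⟩

theorem IdealEquiv.inf_right (hjoin : ∀ x ∈ I, ∀ y ∈ I, x ⊔ y ∈ I) {x x' : L}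
    (h : IdealEquiv I x x') (y : L) : IdealEquiv I (x ⊓ y) (x' ⊓ y) := by
  have hx : IdealEquiv I (x ⊓ y) ((x ⊔ x') ⊓ y) :=
    h.sup_right_self.inf_right_of_le hsc hdown hpersp le_sup_left y
  have hx' : IdealEquiv I (x' ⊓ y) ((x ⊔ x') ⊓ y) :=
    (sup_comm x' x ▸ h.symm.sup_right_self).inf_right_of_le hsc hdown hpersp le_sup_right y
  exact hx.trans hjoin hx'.symm

end Modular

/-- Let `L` be a sectionally complemented modular lattice and
`I` an ideal of `L` closed under perspectivity. Then the relation
`x ≡_I y ⇔ ∃ u ∈ I, x ⊔ u = y ⊔ u` is a lattice congruence on `L`. -/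
theorem stmt15 [IsModularLattice L]
    (hsc : ∀ a b : L, b ≤ a → ∃ c : L, b ⊓ c = ⊥ ∧ b ⊔ c = a)
    (I : Set L) (hne : I.Nonempty)
    (hdown : ∀ x y : L, x ≤ y → y ∈ I → x ∈ I)
    (hjoin : ∀ x ∈ I, ∀ y ∈ I, x ⊔ y ∈ I)
    (hpersp : ∀ x y : L, Perspective x y → y ∈ I → x ∈ I) :
    Equivalence (fun x y : L => ∃ u ∈ I, x ⊔ u = y ⊔ u) ∧
    (∀ x y x' y' : L,
      (∃ u ∈ I, x ⊔ u = x' ⊔ u) → (∃ u ∈ I, y ⊔ u = y' ⊔ u) →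
      (∃ u ∈ I, (x ⊔ y) ⊔ u = (x' ⊔ y') ⊔ u) ∧
      (∃ u ∈ I, (x ⊓ y) ⊔ u = (x' ⊓ y') ⊔ u)) := by
  have hlower : IsLowerSet I := fun _ _ hle hmem => hdown _ _ hle hmem
  refine ⟨⟨IdealEquiv.refl hne, IdealEquiv.symm, IdealEquiv.trans hjoin⟩,
    fun x y x' y' hx hy => ⟨IdealEquiv.sup hjoin hx hy, ?_⟩⟩
  have hx' : IdealEquiv I (x ⊓ y) (x' ⊓ y) := IdealEquiv.inf_right hsc hlower hpersp hjoin hx y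
  have hy' : IdealEquiv I (x' ⊓ y) (x' ⊓ y') := by
    simpa only [inf_comm x'] using IdealEquiv.inf_right hsc hlower hpersp hjoin hy x'
  exact hx'.trans hjoin hy'
end

section
/- Let L be a sectionally complemented modular lattice with least element 0, and let x, y ∈ L. Then x is subperspective to y (there exists z with x ∧ z = 0 and x ∨ z ≤ y ∨ z) if and only if there exists x' ≤ y with x perspective to x'. -/
/-!
Shrink the axis `z` of a subperspectivity to a relative complement `w` of `y ⊓ z` in `[⊥, z]`:
then `w` is disjoint from `y` and `y ⊔ w = y ⊔ z`, so `x ≤ y ⊔ w`. By modularity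
`((x ⊔ w) ⊓ y) ⊔ w = (x ⊔ w) ⊓ (y ⊔ w) = x ⊔ w`, so `w` is an axis of perspectivity between `x`
and `(x ⊔ w) ⊓ y ≤ y`.
-/

variable {L : Type*} [Lattice L] [OrderBot L]

theorem exists_le_inf_eq_bot_sup_eq
    (hsc : ∀ a b : L, b ≤ a → ∃ c : L, b ⊓ c = ⊥ ∧ b ⊔ c = a) (y z : L) :
    ∃ w ≤ z, y ⊓ w = ⊥ ∧ y ⊔ w = y ⊔ z := by
  obtain ⟨w, hw_inf, hw_sup⟩ := hsc z (y ⊓ z) inf_le_right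
  have hwz : w ≤ z := hw_sup ▸ le_sup_right
  refine ⟨w, hwz, ?_, ?_⟩
  · rw [← inf_eq_right.2 hwz, ← inf_assoc, hw_inf]
  · rw [← hw_sup, ← sup_assoc, sup_inf_self]

theorem perspective_sup_inf_of_le_sup [IsModularLattice L] {x y w : L}
    (hxw : x ⊓ w = ⊥) (hyw : y ⊓ w = ⊥) (hx : x ≤ y ⊔ w) :
    Perspective x ((x ⊔ w) ⊓ y) := by
  refine ⟨w, ?_, hxw, ?_⟩
  · rw [inf_sup_assoc_of_le y le_sup_right]
    exact (inf_eq_left.2 (sup_le hx le_sup_right)).symm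
  · exact le_bot_iff.1 (hyw ▸ inf_le_inf_right w inf_le_right)

/-- In a sectionally complemented modular lattice, `x` is
subperspective to `y` iff `x` is perspective to some `x' ≤ y`. -/
theorem stmt16 [IsModularLattice L]
    (hsc : ∀ a b : L, b ≤ a → ∃ c : L, b ⊓ c = ⊥ ∧ b ⊔ c = a)
    (x y : L) :
    (∃ z : L, x ⊓ z = ⊥ ∧ x ⊔ z ≤ y ⊔ z) ↔
      (∃ x' : L, x' ≤ y ∧ Perspective x x') := by
  constructor
  · rintro ⟨z, hxz, hle⟩
    obtain ⟨w, hwz, hyw, hyw_sup⟩ := exists_le_inf_eq_bot_sup_eq hsc y z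
    have hxw : x ⊓ w = ⊥ := le_bot_iff.1 (hxz ▸ inf_le_inf_left x hwz)
    have hx : x ≤ y ⊔ w := hyw_sup ▸ le_sup_left.trans hle
    exact ⟨_, inf_le_right, perspective_sup_inf_of_le_sup hxw hyw hx⟩
  · rintro ⟨x', hx'y, z, hsup, hxz, -⟩
    exact ⟨z, hxz, hsup ▸ sup_le_sup_right hx'y z⟩
end

section
/- Let L be a sectionally complemented modular lattice. An element u ∈ L with a complement is neutral if and only if for all x ∈ L, x subperspective to u and x ∧ u = 0 imply x = 0. -/
variable {L : Type*} [Lattice L] [BoundedOrder L]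

/-- Subperspectivity: `x ≲ u`. -/
def Subperspective (x u : L) : Prop :=
  ∃ z : L, x ⊓ z = ⊥ ∧ x ⊔ z ≤ u ⊔ z

/-- An element `u` of a lattice is neutral iff every triple `{u, x, y}`
generates a distributive sublattice; equivalently (Grätzer), the median
equality holds for every `x`, `y`. -/
def IsNeutralElt (u : L) : Prop :=
  ∀ x y : L, (u ⊓ x) ⊔ (x ⊓ y) ⊔ (y ⊓ u) = (u ⊔ x) ⊓ (x ⊔ y) ⊓ (y ⊔ u)

/-!
If `u` is neutral and `x ⊓ z = ⊥`, `x ⊔ z ≤ u ⊔ z`, then `x` lies below the median of `u, x, z`,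
which collapses to `z ⊓ u`; hence `x ≤ u`, and `x ⊓ u = ⊥` forces `x = ⊥`.

Conversely, let `v` be a complement of `u`. For any `t`, a relative complement `c` of
`t ⊓ u ⊔ t ⊓ v` in `t` is disjoint from both `u` and `v`; disjointness from `v` makes it
subperspective to `u` (with axis `v`), so `c = ⊥` and `t = t ⊓ u ⊔ t ⊓ v`. With modularity this
splitting makes `t ↦ t ⊓ u` a join-homomorphism and `(u ⊔ t) ⊓ v = t ⊓ v`, and the median
inequality is checked separately below `u` and below `v`.
-/

theorem median_le {α : Type*} [Lattice α] (u x y : α) :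
    u ⊓ x ⊔ x ⊓ y ⊔ y ⊓ u ≤ (u ⊔ x) ⊓ (x ⊔ y) ⊓ (y ⊔ u) :=
  sup_le (sup_le
    (le_inf (le_inf (inf_le_left.trans le_sup_left) (inf_le_right.trans le_sup_left))
      (inf_le_left.trans le_sup_right))
    (le_inf (le_inf (inf_le_left.trans le_sup_right) (inf_le_left.trans le_sup_left))
      (inf_le_right.trans le_sup_left)))
    (le_inf (le_inf (inf_le_right.trans le_sup_left) (inf_le_left.trans le_sup_right))
      (inf_le_left.trans le_sup_left))

theorem IsNeutralElt.eq_bot_of_subperspective {u x : L} (hu : IsNeutralElt u)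
    (hx : Subperspective x u) (hxu : x ⊓ u = ⊥) : x = ⊥ := by
  obtain ⟨z, hxz, hle⟩ := hx
  have hx_median : x ≤ (u ⊔ x) ⊓ (x ⊔ z) ⊓ (z ⊔ u) :=
    le_inf (le_inf le_sup_right le_sup_left) (le_sup_left.trans (hle.trans (sup_comm u z).le))
  rw [← hu x z, inf_comm u x, hxu, hxz, bot_sup_eq, bot_sup_eq] at hx_median
  rw [← hxu, inf_eq_left.mpr (hx_median.trans inf_le_right)]

section OrderBot

variable {α : Type*} [Lattice α] [OrderBot α]

theorem eq_of_le_of_forall_inf_eq_bot (hsc : ∀ a b : α, b ≤ a → ∃ c : α, b ⊓ c = ⊥ ∧ b ⊔ c = a)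
    {a t : α} (hat : a ≤ t) (h : ∀ c ≤ t, c ⊓ a = ⊥ → c = ⊥) : a = t := by
  obtain ⟨c, hac, hact⟩ := hsc t a hat
  rwa [h c (le_sup_right.trans hact.le) (inf_comm a c ▸ hac), sup_bot_eq] at hact

theorem sup_inf_eq_left_of_le_of_le [IsModularLattice α] {u v s t : α} (huv : u ⊓ v = ⊥)
    (hs : s ≤ u) (ht : t ≤ v) : (s ⊔ t) ⊓ u = s := by
  have htu : t ⊓ u = ⊥ := le_bot_iff.mp (huv ▸ le_inf inf_le_right (inf_le_left.trans ht))
  rw [sup_inf_assoc_of_le t hs, htu, sup_bot_eq]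

end OrderBot

theorem inf_sup_inf_eq_self_of_subperspective {u v : L}
    (hsc : ∀ a b : L, b ≤ a → ∃ c : L, b ⊓ c = ⊥ ∧ b ⊔ c = a) (huv : IsCompl u v)
    (h : ∀ x : L, Subperspective x u → x ⊓ u = ⊥ → x = ⊥) (t : L) : t ⊓ u ⊔ t ⊓ v = t := by
  refine eq_of_le_of_forall_inf_eq_bot hsc (sup_le inf_le_left inf_le_left) fun c hct hc => ?_
  have disjoint_of_le {w : L} (hw : t ⊓ w ≤ t ⊓ u ⊔ t ⊓ v) : c ⊓ w = ⊥ :=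
    le_bot_iff.mp (hc ▸ le_inf inf_le_left ((inf_le_inf_right w hct).trans hw))
  have hcv : c ⊓ v = ⊥ := disjoint_of_le le_sup_right
  exact h c ⟨v, hcv, huv.sup_eq_top ▸ le_top⟩ (disjoint_of_le le_sup_left)

section Splitting

variable {α : Type*} [Lattice α] [OrderBot α] [IsModularLattice α] {u v : α}

theorem sup_inf_eq_sup_inf_of_split (huv : u ⊓ v = ⊥) (hsplit : ∀ t, t ⊓ u ⊔ t ⊓ v = t)
    (s t : α) : (s ⊔ t) ⊓ u = s ⊓ u ⊔ t ⊓ u := by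
  have hst : s ⊔ t = (s ⊓ u ⊔ t ⊓ u) ⊔ (s ⊓ v ⊔ t ⊓ v) := by
    rw [sup_sup_sup_comm, hsplit, hsplit]
  rw [hst]
  exact sup_inf_eq_left_of_le_of_le huv (sup_le inf_le_right inf_le_right)
    (sup_le inf_le_right inf_le_right)

theorem sup_inf_compl_eq_of_split (huv : u ⊓ v = ⊥) (hsplit : ∀ t, t ⊓ u ⊔ t ⊓ v = t)
    (t : α) : (u ⊔ t) ⊓ v = t ⊓ v := by
  have hut : u ⊔ t = t ⊓ v ⊔ u := by
    conv_lhs => rw [← hsplit t]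
    rw [inf_comm t u, ← sup_assoc, sup_inf_self, sup_comm]
  rw [hut, sup_inf_eq_left_of_le_of_le (inf_comm u v ▸ huv) inf_le_right le_rfl]

end Splitting

theorem isNeutralElt_of_split [IsModularLattice L] {u v : L} (huv : u ⊓ v = ⊥)
    (hsplit : ∀ t, t ⊓ u ⊔ t ⊓ v = t) : IsNeutralElt u := by
  intro x y
  set M := u ⊓ x ⊔ x ⊓ y ⊔ y ⊓ u
  set N := (u ⊔ x) ⊓ (x ⊔ y) ⊓ (y ⊔ u)
  have hNu : N ⊓ u ≤ M :=
    calc N ⊓ u ≤ (x ⊔ y) ⊓ u := inf_le_inf_right u (inf_le_left.trans inf_le_right)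
      _ = x ⊓ u ⊔ y ⊓ u := sup_inf_eq_sup_inf_of_split huv hsplit x y
      _ ≤ M := sup_le (le_sup_of_le_left (le_sup_of_le_left (inf_comm x u).le)) le_sup_right
  have hNv : N ⊓ v ≤ M := by
    have hx : N ⊓ v ≤ x :=
      calc N ⊓ v ≤ (u ⊔ x) ⊓ v := inf_le_inf_right v (inf_le_left.trans inf_le_left)
        _ = x ⊓ v := sup_inf_compl_eq_of_split huv hsplit x
        _ ≤ x := inf_le_left
    have hy : N ⊓ v ≤ y :=
      calc N ⊓ v ≤ (u ⊔ y) ⊓ v := inf_le_inf_right v ((sup_comm y u).le.trans' inf_le_right)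
        _ = y ⊓ v := sup_inf_compl_eq_of_split huv hsplit y
        _ ≤ y := inf_le_left
    exact (le_inf hx hy).trans (le_sup_of_le_left le_sup_right)
  refine le_antisymm (median_le u x y) ?_
  calc N = N ⊓ u ⊔ N ⊓ v := (hsplit N).symm
    _ ≤ M := sup_le hNu hNv

/-- In a sectionally complemented modular lattice, a
complemented element `u` is neutral iff `x ≲ u` and `x ⊓ u = ⊥` imply `x = ⊥`. -/
theorem stmt18 [IsModularLattice L]
    (hsc : ∀ a b : L, b ≤ a → ∃ c : L, b ⊓ c = ⊥ ∧ b ⊔ c = a)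
    (u v : L) (hcompl : u ⊓ v = ⊥ ∧ u ⊔ v = ⊤) :
    IsNeutralElt u ↔
      ∀ x : L, Subperspective x u → x ⊓ u = ⊥ → x = ⊥ := by
  refine ⟨fun hu x hx hxu => hu.eq_bot_of_subperspective hx hxu, fun h => ?_⟩
  exact isNeutralElt_of_split hcompl.1
    (inf_sup_inf_eq_self_of_subperspective hsc (IsCompl.of_eq hcompl.1 hcompl.2) h)
end

section
/- Let A be a Boolean subalgebra of a Boolean algebra B such that both A and B are atomic and every atom of B lies in A (so At A = At B). Then every first-order sentence in the language of lattices with parameters from A that holds in A also holds in B; i.e., A is an elementary substructure of B. -/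
open FirstOrder

/-- The first-order language `(∨, ∧)` of lattices: two binary function
symbols and no relation symbols. -/
def latLang : Language where
  Functions := fun n => match n with
    | 2 => Fin 2
    | _ => Empty
  Relations := fun _ => Empty

/-- Any lattice is a structure for the language `(∨, ∧)`: the function symbol
`0` is interpreted as the join and `1` as the meet. -/
instance latLangStructure (α : Type*) [Lattice α] : latLang.Structure α where
  funMap {n} f x :=
    match n, f, x with
    | 2, f, x => @ite _ (f = (0 : Fin 2)) (instDecidableEqFin 2 f 0) (x 0 ⊔ x 1) (x 0 ⊓ x 1)
  RelMap {n} r _ := r.elim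

/-! ### Auxiliary material: atoms and counting -/

namespace Stmt19Aux

def atomset {C : Type*} [BooleanAlgebra C] (x : C) : Set C := {a | IsAtom a ∧ a ≤ x}

noncomputable def cnt {C : Type*} [BooleanAlgebra C] (x : C) : ℕ∞ := (atomset x).encard

section Cnt

variable {C : Type*} [BooleanAlgebra C]

lemma atom_le_or_le_compl {a : C} (x : C) (ha : IsAtom a) : a ≤ x ∨ a ≤ xᶜ := by
  rcases lt_or_eq_of_le (inf_le_left : a ⊓ x ≤ a) with h | h
  · right
    have hb : a ⊓ x = ⊥ := ha.2 _ h
    exact le_compl_iff_disjoint_right.mpr (disjoint_iff.mpr hb)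
  · left; exact h ▸ inf_le_right

lemma atomset_split (x y : C) :
    atomset x = atomset (x ⊓ y) ∪ atomset (x ⊓ yᶜ) := by
  ext a
  constructor
  · rintro ⟨ha, hax⟩
    rcases atom_le_or_le_compl y ha with h | h
    · exact Or.inl ⟨ha, le_inf hax h⟩
    · exact Or.inr ⟨ha, le_inf hax h⟩
  · rintro (⟨ha, hax⟩ | ⟨ha, hax⟩) <;> exact ⟨ha, hax.trans inf_le_left⟩

lemma cnt_split (x y : C) : cnt x = cnt (x ⊓ y) + cnt (x ⊓ yᶜ) := by
  rw [cnt, atomset_split x y, Set.encard_union_eq]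
  · rfl
  · rw [Set.disjoint_left]
    rintro a ⟨ha, h1⟩ ⟨_, h2⟩
    exact ha.1 (le_bot_iff.mp (le_trans (le_inf (h1.trans inf_le_right)
      (h2.trans inf_le_right)) (by simp)))

lemma cnt_eq_zero [IsAtomic C] {x : C} : cnt x = 0 ↔ x = ⊥ := by
  rw [cnt, Set.encard_eq_zero]
  constructor
  · intro h
    by_contra hx
    obtain ⟨a, ha, hax⟩ := (IsAtomic.eq_bot_or_exists_atom_le x).resolve_left hx
    exact Set.eq_empty_iff_forall_notMem.mp h a ⟨ha, hax⟩
  · rintro rfl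
    ext a; simp only [Set.mem_empty_iff_false, iff_false]
    rintro ⟨ha, hax⟩; exact ha.1 (le_bot_iff.mp hax)

lemma atomset_finsetSup (F : Finset C) (hF : ∀ a ∈ F, IsAtom a) :
    atomset (F.sup id) = ↑F := by
  ext b
  constructor
  · rintro ⟨hb, hle⟩
    have h1 : b = F.sup fun a => b ⊓ a := by
      conv_lhs => rw [← inf_eq_left.mpr hle, Finset.sup_inf_distrib_left]
      rfl
    have h2 : ∃ a ∈ F, b ⊓ a ≠ ⊥ := by
      by_contra hc
      push_neg at hc
      exact hb.1 (h1.trans (Finset.sup_eq_bot_iff _ _ |>.mpr hc))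
    obtain ⟨a, haF, hne⟩ := h2
    have hba : b ≤ a := by
      rcases lt_or_eq_of_le (inf_le_left : b ⊓ a ≤ b) with h | h
      · exact absurd (hb.2 _ h) hne
      · exact h ▸ inf_le_right
    have : b = a := by
      rcases lt_or_eq_of_le hba with h | h
      · exact absurd ((hF a haF).2 _ h) hb.1
      · exact h
    exact this ▸ haF
  · intro hb
    exact ⟨hF b hb, Finset.le_sup (f := id) hb⟩

lemma exists_sub (t : C) (n : ℕ∞) (hfin : n ≠ ⊤) (h : n ≤ cnt t) :
    ∃ y, y ≤ t ∧ cnt y = n ∧ cnt (t ⊓ yᶜ) + n = cnt t := by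
  obtain ⟨S, hSsub, hScard⟩ := Set.exists_subset_encard_eq h
  have hSfin : S.Finite := Set.encard_ne_top_iff.mp (hScard ▸ hfin)
  set F := hSfin.toFinset with hFdef
  have hFatoms : ∀ a ∈ F, IsAtom a := fun a ha => (hSsub (hSfin.mem_toFinset.mp ha)).1
  have hyt : F.sup id ≤ t := Finset.sup_le fun a ha => (hSsub (hSfin.mem_toFinset.mp ha)).2
  have hcnt : cnt (F.sup id) = n := by
    rw [cnt, atomset_finsetSup F hFatoms, hSfin.coe_toFinset]
    exact hScard
  refine ⟨F.sup id, hyt, hcnt, ?_⟩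
  have := cnt_split t (F.sup id)
  rw [inf_eq_right.mpr hyt, hcnt] at this
  rw [this, add_comm]

end Cnt

/-! ### Cells -/

section Cell

variable {C : Type*} [BooleanAlgebra C] {ι : Type*} [Fintype ι]

def cell (c : ι → C) (ε : ι → Bool) : C :=
  Finset.univ.inf fun i => if ε i then c i else (c i)ᶜ

lemma cell_le (c : ι → C) (ε : ι → Bool) (i : ι) :
    cell c ε ≤ if ε i then c i else (c i)ᶜ :=
  Finset.inf_le (Finset.mem_univ i)

lemma cell_inf_apply (c : ι → C) (ε : ι → Bool) (i : ι) :
    cell c ε ⊓ c i = if ε i then cell c ε else ⊥ := by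
  by_cases h : ε i
  · simp only [h, if_true]
    exact inf_eq_left.mpr (by simpa [h] using cell_le c ε i)
  · simp only [h, if_false]
    have := cell_le c ε i
    rw [if_neg h] at this
    exact le_bot_iff.mp (le_trans (inf_le_inf_right _ this) (by simp))

lemma cell_disjoint (c : ι → C) {ε ε' : ι → Bool} (h : ε ≠ ε') :
    cell c ε ⊓ cell c ε' = ⊥ := by
  obtain ⟨i, hi⟩ := Function.ne_iff.mp h
  have h1 := cell_le c ε i
  have h2 := cell_le c ε' i
  rcases Bool.eq_false_or_eq_true (ε i) with h3 | h3 <;>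
    rcases Bool.eq_false_or_eq_true (ε' i) with h4 | h4 <;>
      simp_all
  · exact le_bot_iff.mp (le_trans (inf_le_inf h1 h2) (by simp))
  · exact le_bot_iff.mp (le_trans (inf_le_inf h1 h2) (by simp))

open Classical in
lemma atom_le_cell {a : C} (ha : IsAtom a) (c : ι → C) :
    a ≤ cell c (fun i => decide (a ≤ c i)) := by
  apply Finset.le_inf
  intro i _
  by_cases h : a ≤ c i
  · simp [h]
  · simp only [h, decide_eq_false, if_false]
    exact (atom_le_or_le_compl (c i) ha).resolve_left h

lemma eq_bot_of_cells [IsAtomic C] {z : C} (c : ι → C)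
    (h : ∀ ε, z ⊓ cell c ε = ⊥) : z = ⊥ := by
  by_contra hz
  obtain ⟨a, ha, haz⟩ := (IsAtomic.eq_bot_or_exists_atom_le z).resolve_left hz
  exact ha.1 (le_bot_iff.mp ((h _) ▸ le_inf haz (atom_le_cell ha c)))

lemma cell_option (c : ι → C) (x : C) (ε : Option ι → Bool) :
    cell (fun o => o.elim x c) ε = (if ε none then x else xᶜ) ⊓ cell c (ε ∘ some) := by
  rw [cell, univ_option, Finset.insertNone]
  simp only [OrderEmbedding.coe_ofMapLEIff, Finset.inf_cons, Finset.inf_map]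
  rfl

lemma cell_reindex {κ : Type*} [Fintype κ] (e : κ ≃ ι) (c : ι → C) (ε : ι → Bool) :
    cell (c ∘ e) (ε ∘ e) = cell c ε := by
  rw [cell, cell]
  have h : (fun k => if (ε ∘ e) k = true then (c ∘ e) k else ((c ∘ e) k)ᶜ)
      = (fun i => if ε i = true then c i else (c i)ᶜ) ∘ e.toEmbedding := rfl
  rw [h, ← Finset.inf_map, Finset.map_univ_equiv]

end Cell

/-! ### Term evaluation over cells -/

lemma bool_sup : ∀ a b : Bool, a ⊔ b = (a || b) := by decide
lemma bool_inf : ∀ a b : Bool, a ⊓ b = (a && b) := by decide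

lemma latLang_funMap {α : Type*} [Lattice α] (f : latLang.Functions 2) (x : Fin 2 → α) :
    Language.Structure.funMap f x = @ite _ (f = (0 : Fin 2)) (instDecidableEqFin 2 f 0) (x 0 ⊔ x 1) (x 0 ⊓ x 1) := rfl

section Terms

variable {C : Type*} [BooleanAlgebra C] {ι : Type*} [Fintype ι]

lemma cell_inf_term (c : ι → C) (ε : ι → Bool) (t : latLang.Term ι) :
    cell c ε ⊓ t.realize c = if t.realize ε then cell c ε else ⊥ := by
  induction t with
  | var i => convert cell_inf_apply c ε i <;> simp
  | func f ts ih =>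
    rename_i n
    match n, f with
    | 2, f =>
      rw [Language.Term.realize_func, Language.Term.realize_func, latLang_funMap,
        latLang_funMap]
      by_cases hf : f = (0 : Fin 2)
      · erw [if_pos hf, if_pos hf]
        rw [inf_sup_left, ih 0, ih 1, bool_sup]
        rcases Bool.eq_false_or_eq_true ((ts 0).realize ε) with h0 | h0 <;>
          rcases Bool.eq_false_or_eq_true ((ts 1).realize ε) with h1 | h1 <;> simp [h0, h1]
      · simp only [hf, ↓reduceIte]
        rw [show cell c ε ⊓ ((ts 0).realize c ⊓ (ts 1).realize c)
          = (cell c ε ⊓ (ts 0).realize c) ⊓ (cell c ε ⊓ (ts 1).realize c) by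
            rw [inf_inf_distrib_left], ih 0, ih 1, bool_inf]
        rcases Bool.eq_false_or_eq_true ((ts 0).realize ε) with h0 | h0 <;>
          rcases Bool.eq_false_or_eq_true ((ts 1).realize ε) with h1 | h1 <;> simp [h0, h1]

lemma term_eq_iff [IsAtomic C] (c : ι → C) (t₁ t₂ : latLang.Term ι) :
    t₁.realize c = t₂.realize c ↔
      ∀ ε : ι → Bool, t₁.realize ε = t₂.realize ε ∨ cell c ε = ⊥ := by
  constructor
  · intro h ε
    by_cases hb : t₁.realize ε = t₂.realize ε
    · exact Or.inl hb
    · right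
      have h1 := cell_inf_term c ε t₁
      have h2 := cell_inf_term c ε t₂
      rw [h] at h1
      rw [h1] at h2
      rcases Bool.eq_false_or_eq_true (t₁.realize ε) with e1 | e1 <;>
        rcases Bool.eq_false_or_eq_true (t₂.realize ε) with e2 | e2 <;>
          simp [e1, e2] at h2 hb ⊢ <;> tauto
  · intro h
    have key : ∀ ε, (symmDiff (t₁.realize c) (t₂.realize c)) ⊓ cell c ε = ⊥ := by
      intro ε
      rcases h ε with hb | hcell
      · have h1 := cell_inf_term c ε t₁
        have h2 := cell_inf_term c ε t₂
        rw [hb] at h1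
        have heq : cell c ε ⊓ t₁.realize c = cell c ε ⊓ t₂.realize c := h1.trans h2.symm
        rw [symmDiff_def, inf_comm, inf_sup_left]
        have e1 : cell c ε ⊓ (t₁.realize c \ t₂.realize c) = ⊥ := by
          rw [sdiff_eq, ← inf_assoc, heq, inf_assoc]
          simp
        have e2 : cell c ε ⊓ (t₂.realize c \ t₁.realize c) = ⊥ := by
          rw [sdiff_eq, ← inf_assoc, ← heq, inf_assoc]
          simp
        rw [e1, e2]
        simp
      · rw [hcell, inf_bot_eq]
    have := eq_bot_of_cells c key
    exact symmDiff_eq_bot.mp this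

end Terms

/-! ### The back-and-forth equivalence -/

section BEquiv

variable {C : Type*} {D : Type*} [BooleanAlgebra C] [BooleanAlgebra D]
variable {ι : Type*} [Fintype ι]

def BEquiv (N : ℕ) (c : ι → C) (d : ι → D) : Prop :=
  ∀ ε : ι → Bool, min (cnt (cell c ε)) (N : ℕ∞) = min (cnt (cell d ε)) (N : ℕ∞)

lemma BEquiv.symm {N : ℕ} {c : ι → C} {d : ι → D} (h : BEquiv N c d) : BEquiv N d c :=
  fun ε => (h ε).symm

lemma BEquiv.mono {N M : ℕ} {c : ι → C} {d : ι → D} (h : BEquiv N c d) (hMN : M ≤ N) :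
    BEquiv M c d := by
  intro ε
  have hm : ((M : ℕ∞)) = min (N : ℕ∞) (M : ℕ∞) := (min_eq_right (by exact_mod_cast hMN)).symm
  rw [hm, ← min_assoc, ← min_assoc, h ε]

lemma BEquiv.reindex {κ : Type*} [Fintype κ] (e : κ ≃ ι) {N : ℕ} {c : ι → C} {d : ι → D}
    (h : BEquiv N c d) : BEquiv N (c ∘ e) (d ∘ e) := by
  intro ε
  have hε : ε = (ε ∘ e.symm) ∘ e := by
    funext k; simp
  rw [hε, cell_reindex e c (ε ∘ e.symm), cell_reindex e d (ε ∘ e.symm)]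
  exact h (ε ∘ e.symm)

lemma BEquiv.cell_bot {N : ℕ} [IsAtomic C] [IsAtomic D] {c : ι → C} {d : ι → D}
    (h : BEquiv N c d) (hN : 1 ≤ N) (ε : ι → Bool) :
    cell c ε = ⊥ ↔ cell d ε = ⊥ := by
  have h1 := (h.mono hN) ε
  constructor
  · intro hc
    have : min (cnt (cell d ε)) ((1 : ℕ) : ℕ∞) = 0 := by
      rw [← h1, cnt_eq_zero.mpr hc]; simp
    rcases min_eq_iff.mp this with ⟨h2, _⟩ | ⟨h2, _⟩
    · exact cnt_eq_zero.mp h2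
    · exact absurd h2 (by simp)
  · intro hc
    have : min (cnt (cell c ε)) ((1 : ℕ) : ℕ∞) = 0 := by
      rw [h1, cnt_eq_zero.mpr hc]; simp
    rcases min_eq_iff.mp this with ⟨h2, _⟩ | ⟨h2, _⟩
    · exact cnt_eq_zero.mp h2
    · exact absurd h2 (by simp)

end BEquiv

/-! ### The one-step extension (back-and-forth) lemma -/

section Percell

lemma percell {C D : Type*} [BooleanAlgebra C] [BooleanAlgebra D] (N : ℕ) (s : C) (t : D) (x : C)
    (h : min (cnt s) (2 * N : ℕ) = min (cnt t) (2 * N : ℕ)) :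
    ∃ y, y ≤ t ∧ min (cnt (s ⊓ x)) (N : ℕ∞) = min (cnt y) (N : ℕ∞) ∧
      min (cnt (s ⊓ xᶜ)) (N : ℕ∞) = min (cnt (t ⊓ yᶜ)) (N : ℕ∞) := by
  set k₁ := cnt (s ⊓ x) with hk1def
  set k₂ := cnt (s ⊓ xᶜ) with hk2def
  have hks : k₁ + k₂ = cnt s := (cnt_split s x).symm
  have h2N : ((2 * N : ℕ) : ℕ∞) = (N : ℕ∞) + (N : ℕ∞) := by push_cast; ring
  have hN2N : (N : ℕ∞) ≤ ((2 * N : ℕ) : ℕ∞) := by rw [h2N]; exact le_self_add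
  rcases le_or_gt (N : ℕ∞) k₂ with hk2 | hk2
  · set n₁ := min k₁ (N : ℕ∞) with hn1def
    have hn1top : n₁ ≠ ⊤ := by
      intro hc
      exact (ENat.coe_ne_top N) (top_le_iff.mp (by rw [← hc]; exact min_le_right _ _))
    have hn1t : n₁ ≤ cnt t := by
      calc n₁ ≤ min (cnt s) (2 * N : ℕ) := le_min
            (le_trans (min_le_left _ _) (hks ▸ le_self_add))
            (le_trans (min_le_right _ _) hN2N)
        _ = min (cnt t) (2 * N : ℕ) := h
        _ ≤ cnt t := min_le_left _ _
    obtain ⟨y, hyt, hy, hsub⟩ := exists_sub t n₁ hn1top hn1t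
    refine ⟨y, hyt, ?_, ?_⟩
    · rw [hy, hn1def, min_eq_left (min_le_right k₁ (N : ℕ∞))]
    · rw [min_eq_right hk2]
      have hge : n₁ + (N : ℕ∞) ≤ cnt t := by
        calc n₁ + (N : ℕ∞) ≤ min (cnt s) (2 * N : ℕ) := le_min
              (hks ▸ add_le_add (min_le_left _ _) hk2)
              (h2N ▸ add_le_add (min_le_right _ _) le_rfl)
          _ = min (cnt t) (2 * N : ℕ) := h
          _ ≤ cnt t := min_le_left _ _
      have : (N : ℕ∞) + n₁ ≤ cnt (t ⊓ yᶜ) + n₁ := by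
        rw [hsub]; rwa [add_comm] at hge
      exact (min_eq_right ((WithTop.add_le_add_iff_right hn1top).mp this)).symm
  · have hk2top : k₂ ≠ ⊤ := fun hc => by rw [hc] at hk2; exact (not_top_lt hk2)
    have hk2t : k₂ ≤ cnt t := by
      calc k₂ ≤ min (cnt s) (2 * N : ℕ) := le_min
            (hks ▸ le_add_self) (le_trans hk2.le hN2N)
        _ = min (cnt t) (2 * N : ℕ) := h
        _ ≤ cnt t := min_le_left _ _
    obtain ⟨z, hzt, hz, hsub⟩ := exists_sub t k₂ hk2top hk2t
    have htyc : t ⊓ (t ⊓ zᶜ)ᶜ = z := by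
      rw [compl_inf, compl_compl, inf_sup_left, inf_compl_eq_bot, bot_sup_eq,
        inf_eq_right.mpr hzt]
    refine ⟨t ⊓ zᶜ, inf_le_left, ?_, ?_⟩
    · rcases le_or_gt (N : ℕ∞) k₁ with hk1 | hk1
      · rw [min_eq_right hk1]
        have hge : (N : ℕ∞) + k₂ ≤ cnt t := by
          calc (N : ℕ∞) + k₂ ≤ min (cnt s) (2 * N : ℕ) := le_min
                (hks ▸ add_le_add hk1 le_rfl)
                (h2N ▸ add_le_add le_rfl hk2.le)
            _ = min (cnt t) (2 * N : ℕ) := h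
            _ ≤ cnt t := min_le_left _ _
        have : (N : ℕ∞) + k₂ ≤ cnt (t ⊓ zᶜ) + k₂ := by rw [hsub]; exact hge
        exact (min_eq_right ((WithTop.add_le_add_iff_right hk2top).mp this)).symm
      · have hk1top : k₁ ≠ ⊤ := fun hc => by rw [hc] at hk1; exact (not_top_lt hk1)
        have hslt : k₁ + k₂ < ((2 * N : ℕ) : ℕ∞) := by
          rw [h2N]
          exact WithTop.add_lt_add_of_lt_of_le hk2top hk1 hk2.le
        have hct : cnt t = k₁ + k₂ := by
          rw [← hks, min_eq_left hslt.le] at h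
          rcases le_total (cnt t) ((2 * N : ℕ) : ℕ∞) with hle | hle
          · rw [min_eq_left hle] at h; exact h.symm
          · rw [min_eq_right hle] at h; exact absurd h (ne_of_lt hslt)
        have : cnt (t ⊓ zᶜ) + k₂ = k₁ + k₂ := hsub.trans hct
        rw [WithTop.add_right_cancel hk2top this]
    · rw [htyc, hz]

lemma bf_step {C D : Type*} [BooleanAlgebra C] [BooleanAlgebra D]
    {ι : Type*} [Fintype ι] (N : ℕ) (c : ι → C) (d : ι → D) (x : C)
    (h : BEquiv (2 * N) c d) :
    ∃ y : D, BEquiv N (fun o : Option ι => o.elim x c) (fun o : Option ι => o.elim y d) := by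
  classical
  choose Y hY1 hY2 hY3 using fun ε : ι → Bool =>
    percell N (cell c ε) (cell d ε) x (h ε)
  set y := Finset.univ.sup Y with hydef
  have key1 : ∀ ε, cell d ε ⊓ y = Y ε := by
    intro ε
    rw [hydef, Finset.sup_inf_distrib_left]
    apply le_antisymm
    · apply Finset.sup_le
      intro ε' _
      by_cases hεε : ε' = ε
      · subst hεε; exact inf_le_right
      · calc cell d ε ⊓ Y ε' ≤ cell d ε ⊓ cell d ε' :=
              inf_le_inf_left _ (hY1 ε')
          _ = ⊥ := cell_disjoint d (fun hc => hεε hc.symm)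
          _ ≤ Y ε := bot_le
    · calc Y ε = cell d ε ⊓ Y ε := (inf_eq_right.mpr (hY1 ε)).symm
        _ ≤ Finset.univ.sup fun ε' => cell d ε ⊓ Y ε' :=
            Finset.le_sup (f := fun ε' => cell d ε ⊓ Y ε') (Finset.mem_univ ε)
  have key2 : ∀ ε, cell d ε ⊓ yᶜ = cell d ε ⊓ (Y ε)ᶜ := by
    intro ε
    apply le_antisymm
    · exact inf_le_inf_left _ (compl_le_compl (Finset.le_sup (Finset.mem_univ ε)))
    · apply le_inf inf_le_left
      rw [le_compl_iff_disjoint_right, disjoint_iff]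
      rw [inf_comm (cell d ε) ((Y ε)ᶜ), inf_assoc, key1 ε, inf_comm, inf_compl_eq_bot]
  refine ⟨y, ?_⟩
  intro ε
  rw [cell_option, cell_option]
  by_cases hb : ε none
  · rw [if_pos hb, if_pos hb, inf_comm x _, inf_comm y _, key1 (ε ∘ some)]
    exact hY2 (ε ∘ some)
  · rw [if_neg hb, if_neg hb, inf_comm xᶜ _, inf_comm yᶜ _, key2 (ε ∘ some)]
    exact hY3 (ε ∘ some)

end Percell

/-! ### Quantifier rank and the Ehrenfeucht–Fraïssé argument -/

def frank {α : Type*} : ∀ {l : ℕ}, latLang.BoundedFormula α l → ℕ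
  | _, .falsum => 1
  | _, .equal _ _ => 1
  | _, .rel _ _ => 1
  | _, .imp φ ψ => max (frank φ) (frank ψ)
  | _, .all φ => 2 * frank φ

def optEquiv (n l : ℕ) : Option (Fin n ⊕ Fin l) ≃ (Fin n ⊕ Fin (l + 1)) where
  toFun o := o.elim (Sum.inr (Fin.last l)) (Sum.map id Fin.castSucc)
  invFun s :=
    Sum.rec (fun i => some (Sum.inl i))
      (fun j => if h : j = Fin.last l then none else some (Sum.inr (j.castPred h))) s
  left_inv o := by
    rcases o with _ | s
    · simp
    · rcases s with i | j
      · simp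
      · simp [(Fin.castSucc_lt_last j).ne]
  right_inv s := by
    rcases s with i | j
    · simp
    · by_cases h : j = Fin.last l
      · subst h; simp
      · simp [h, Fin.castSucc_castPred]

lemma tuple_comp_optEquiv {C : Type*} {n l : ℕ} (v : Fin n → C) (xs : Fin l → C) (x : C) :
    (Sum.elim v (Fin.snoc xs x)) ∘ (optEquiv n l) = fun o => o.elim x (Sum.elim v xs) := by
  funext o
  rcases o with _ | s
  · simp [optEquiv, Fin.snoc_last]
  · rcases s with i | j
    · simp [optEquiv]
    · simp [optEquiv, Fin.snoc_castSucc]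

lemma tuple_comp_optEquiv_symm {C : Type*} {n l : ℕ} (v : Fin n → C) (xs : Fin l → C) (x : C) :
    (fun o : Option (Fin n ⊕ Fin l) => o.elim x (Sum.elim v xs)) ∘ (optEquiv n l).symm
      = Sum.elim v (Fin.snoc xs x) := by
  rw [← tuple_comp_optEquiv v xs x]
  funext s
  simp

theorem ef_transfer {C : Type u_1} {D : Type u_2} [BooleanAlgebra C] [BooleanAlgebra D]
    [IsAtomic C] [IsAtomic D] {n : ℕ} :
    ∀ {l : ℕ} (φ : latLang.BoundedFormula (Fin n) l) (v : Fin n → C) (w : Fin n → D)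
      (xs : Fin l → C) (ys : Fin l → D),
      BEquiv (frank φ) (Sum.elim v xs) (Sum.elim w ys) →
      (φ.Realize v xs ↔ φ.Realize w ys) := by
  intro l φ
  induction φ with
  | falsum =>
    intro v w xs ys _
    simp [Language.BoundedFormula.Realize]
  | equal t₁ t₂ =>
    intro v w xs ys heq
    simp only [Language.BoundedFormula.Realize]
    rw [term_eq_iff, term_eq_iff]
    have hbot := heq.cell_bot le_rfl
    constructor
    · intro h ε
      rcases h ε with h1 | h1
      · exact Or.inl h1
      · exact Or.inr ((hbot ε).mp h1)
    · intro h ε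
      rcases h ε with h1 | h1
      · exact Or.inl h1
      · exact Or.inr ((hbot ε).mpr h1)
  | rel R ts => exact Empty.elim R
  | imp φ ψ ih₁ ih₂ =>
    intro v w xs ys heq
    rw [Language.BoundedFormula.realize_imp, Language.BoundedFormula.realize_imp]
    exact imp_congr
      (ih₁ v w xs ys (heq.mono (le_max_left _ _)))
      (ih₂ v w xs ys (heq.mono (le_max_right _ _)))
  | all φ ih =>
    intro v w xs ys heq
    rw [Language.BoundedFormula.realize_all, Language.BoundedFormula.realize_all]
    constructor
    · intro hC b
      obtain ⟨a, ha⟩ := bf_step (frank φ) (Sum.elim w ys) (Sum.elim v xs) b heq.symm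
      have ha' := BEquiv.reindex (optEquiv n _).symm ha.symm
      rw [tuple_comp_optEquiv_symm v xs a, tuple_comp_optEquiv_symm w ys b] at ha'
      exact (ih v w (Fin.snoc xs a) (Fin.snoc ys b) ha').mp (hC a)
    · intro hD a
      obtain ⟨b, hb⟩ := bf_step (frank φ) (Sum.elim v xs) (Sum.elim w ys) a heq
      have hb' := BEquiv.reindex (optEquiv n _).symm hb
      rw [tuple_comp_optEquiv_symm v xs a, tuple_comp_optEquiv_symm w ys b] at hb'
      exact (ih v w (Fin.snoc xs a) (Fin.snoc ys b) hb').mpr (hD b)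

section Transfer

variable {A B : Type*} [BooleanAlgebra A] [BooleanAlgebra B]

lemma map_le_iff (f : BoundedLatticeHom A B) (hf : Function.Injective f) {p q : A} :
    f p ≤ f q ↔ p ≤ q := by
  constructor
  · intro h
    have h2 : f (p ⊓ q) = f p := by rw [map_inf]; exact inf_eq_left.mpr h
    exact inf_eq_left.mp (hf h2)
  · intro h
    have : f p = f (p ⊓ q) := by rw [inf_eq_left.mpr h]
    rw [this, map_inf]
    exact inf_le_right

lemma map_compl (f : BoundedLatticeHom A B) (a : A) : f aᶜ = (f a)ᶜ := by
  have hc : IsCompl (f a) (f aᶜ) := by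
    constructor
    · exact disjoint_iff.mpr (by rw [← map_inf]; simp)
    · exact codisjoint_iff.mpr (by rw [← map_sup]; simp)
  exact hc.compl_eq.symm

lemma cnt_map (f : BoundedLatticeHom A B) (hf : Function.Injective f)
    (hAtomsOnto : ∀ b : B, IsAtom b → ∃ a : A, IsAtom a ∧ f a = b)
    (hAtomsTo : ∀ a : A, IsAtom a → IsAtom (f a)) (a : A) :
    cnt (f a) = cnt a := by
  have hset : atomset (f a) = ⇑f '' atomset a := by
    ext b
    constructor
    · rintro ⟨hb, hble⟩
      obtain ⟨a', ha', rfl⟩ := hAtomsOnto b hb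
      exact ⟨a', ⟨ha', (map_le_iff f hf).mp hble⟩, rfl⟩
    · rintro ⟨a', ⟨h1, h2⟩, rfl⟩
      exact ⟨hAtomsTo a' h1, (map_le_iff f hf).mpr h2⟩
  rw [cnt, cnt, hset, hf.encard_image]

lemma cell_map {ι : Type*} [Fintype ι] (f : BoundedLatticeHom A B) (c : ι → A) (ε : ι → Bool) :
    cell (⇑f ∘ c) ε = f (cell c ε) := by
  rw [cell, cell, map_finset_inf]
  congr 1
  funext i
  by_cases h : ε i
  · simp [h]
  · simp [h, map_compl]

end Transfer

end Stmt19Aux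

/-- Let `A` be a Boolean subalgebra of a Boolean algebra `B`
(presented as an injective bounded lattice homomorphism `f : A → B`) such that
`A` and `B` are atomic and `At A = At B` (every atom of `B` comes from an atom
of `A`, and `f` sends atoms to atoms). Then `A` is an elementary substructure
of `B` for the first-order language of lattices: every formula with parameters
from `A` holds in `A` iff it holds in `B`. -/
theorem stmt19 {A B : Type*} [BooleanAlgebra A] [BooleanAlgebra B]
    (f : BoundedLatticeHom A B) (hf : Function.Injective f)
    [IsAtomic A] [IsAtomic B]
    (hAtomsOnto : ∀ b : B, IsAtom b → ∃ a : A, IsAtom a ∧ f a = b)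
    (hAtomsTo : ∀ a : A, IsAtom a → IsAtom (f a)) :
    ∀ (n : ℕ) (φ : latLang.Formula (Fin n)) (v : Fin n → A),
      φ.Realize (⇑f ∘ v) ↔ φ.Realize v := by
  intro n φ v
  have htup : Sum.elim (⇑f ∘ v) (default : Fin 0 → B)
      = ⇑f ∘ (Sum.elim v (default : Fin 0 → A)) := by
    funext i
    rcases i with i | j
    · rfl
    · exact j.elim0
  have hbeq : Stmt19Aux.BEquiv (Stmt19Aux.frank φ)
      (Sum.elim (⇑f ∘ v) (default : Fin 0 → B)) (Sum.elim v (default : Fin 0 → A)) := by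
    intro ε
    rw [htup, Stmt19Aux.cell_map f _ ε, Stmt19Aux.cnt_map f hf hAtomsOnto hAtomsTo]
  exact Stmt19Aux.ef_transfer φ (⇑f ∘ v) v default default hbeq
end
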